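/- arXiv:2201.09835 — 5 statements merged into one kernel-verified Lean document; each statement's English description precedes it below -/
import Mathlib

section
/- Let G be a finite simple graph on vertex set {1,…,n} and let i→j and k→l be oriented edges of G whose underlying unoriented edges are distinct. Then the segment conv{e_i − e_j, e_k − e_l} is a face of the symmetric edge polytope P_G — precisely, there exists a linear functional a ∈ ℝ^n whose set of maximizers over P_G equals this segment — if and only if there is no directed cycle of length 3 or 4 in G containing both arcs i→j and k→l. -/
open SimpleGraph Finset Filter

namespace SEP

/-- The vector `e_i - e_j` in `ℝ^n`. -/
def eVec {n : ℕ} (i j : Fin n) : Fin n → ℝ :=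
  fun t => (if t = i then 1 else 0) - (if t = j then 1 else 0)

/-- The symmetric edge polytope of a graph on `Fin n`. -/
def symEdgePolytope {n : ℕ} (G : SimpleGraph (Fin n)) : Set (Fin n → ℝ) :=
  convexHull ℝ {x | ∃ i j, G.Adj i j ∧ x = eVec i j}

/-- Both darts `a` and `b` are arcs of a common directed cycle of length `m` of `G`. -/
def dartsInCycle {V : Type*} (G : SimpleGraph V) (a b : G.Dart) (m : ℕ) : Prop :=
  ∃ (u : V) (w : G.Walk u u), w.IsCycle ∧ w.length = m ∧ a ∈ w.darts ∧ b ∈ w.darts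

/-- `F` is a face of the polytope `P`: the set of maximizers of some linear functional. -/
def IsFaceOfPolytope {n : ℕ} (P F : Set (Fin n → ℝ)) : Prop :=
  ∃ a : Fin n → ℝ,
    F = {x | x ∈ P ∧ ∀ y ∈ P, ∑ t, a t * y t ≤ ∑ t, a t * x t}

/-- Dimension of (the affine span of) a subset of `ℝ^n`. -/
noncomputable def polyDim {n : ℕ} (s : Set (Fin n → ℝ)) : ℕ :=
  Module.finrank ℝ (vectorSpan ℝ s)

/-- `v` is a vertex of the polytope `P`. -/
def IsVertexOfPolytope {n : ℕ} (P : Set (Fin n → ℝ)) (v : Fin n → ℝ) : Prop :=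
  IsFaceOfPolytope P {v}

/-- `F` is an edge (a 1-dimensional face) of the polytope `P`. -/
def IsEdgeOfPolytope {n : ℕ} (P F : Set (Fin n → ℝ)) : Prop :=
  IsFaceOfPolytope P F ∧ polyDim F = 1

/-- A polytope is simple if every vertex lies on exactly `dim P` edges. -/
def IsSimplePolytope {n : ℕ} (P : Set (Fin n → ℝ)) : Prop :=
  ∀ v, IsVertexOfPolytope P v →
    Set.ncard {F : Set (Fin n → ℝ) | IsEdgeOfPolytope P F ∧ v ∈ F} = polyDim P

/-- Two disjoint edges, on four vertices. -/
def twoDisjointEdges : SimpleGraph (Fin 4) :=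
  SimpleGraph.fromEdgeSet {s(0, 1), s(2, 3)}

/-- The cyclomatic number `|E| - |V| + c` of a graph, as an integer. -/
noncomputable def cyc {V : Type*} (G : SimpleGraph V) : ℤ :=
  (G.edgeSet.ncard : ℤ) + Nat.card G.ConnectedComponent - Nat.card V

/-- A graph is 2-connected: connected, with at least 3 vertices, and deleting any
single vertex leaves it connected. -/
def TwoConnected {V : Type*} (G : SimpleGraph V) : Prop :=
  G.Connected ∧ 3 ≤ Nat.card V ∧ ∀ v : V, (G.induce {u | u ≠ v}).Connected

/-- The subgraph `H` consists of a single edge of `G`. -/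
def IsSingleEdge {V : Type*} (G : SimpleGraph V) (H : G.Subgraph) : Prop :=
  ∃ (u v : V) (h : G.Adj u v), H = G.subgraphOfAdj h

/-- `H` is a 2-connected component (block) of `G`: an inclusion-maximal subgraph that is
2-connected or a single edge. -/
def IsBlock {V : Type*} (G : SimpleGraph V) (H : G.Subgraph) : Prop :=
  (TwoConnected H.coe ∨ IsSingleEdge G H) ∧
    ∀ H' : G.Subgraph, H ≤ H' → (TwoConnected H'.coe ∨ IsSingleEdge G H') → H' = H

/-- A pair of darts (oriented edges) of `G`, with distinct underlying edges, is *bad*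
with respect to the order `elt` on edges. -/
def BadPair {V : Type*} (G : SimpleGraph V) (elt : Sym2 V → Sym2 V → Prop)
    (a b : G.Dart) : Prop :=
  a.edge ≠ b.edge ∧
    (dartsInCycle G a b 3 ∨
      ∃ (u : V) (w : G.Walk u u), w.IsCycle ∧ w.length = 4 ∧ a ∈ w.darts ∧ b ∈ w.darts ∧
        (∃ e ∈ w.edges, elt e a.edge) ∧ (∃ e ∈ w.edges, elt e b.edge))

/-- `n₁(G, <)`: the number of (unordered) bad pairs of oriented edges. -/
noncomputable def n1 {V : Type*} (G : SimpleGraph V) (elt : Sym2 V → Sym2 V → Prop) : ℕ :=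
  Set.ncard {z : Sym2 G.Dart | ∃ a b, BadPair G elt a b ∧ z = s(a, b)}

/-- `γ₂(G, <) = 2 cy(G)(cy(G)+2) - n₁(G, <)`. -/
noncomputable def gammaTwo {V : Type*} (G : SimpleGraph V)
    (elt : Sym2 V → Sym2 V → Prop) : ℤ :=
  2 * cyc G * (cyc G + 2) - (n1 G elt : ℤ)

/-- Restriction of an order on `Sym2 V` to `Sym2 s` for `s : Set V`. -/
def restrictOrd {V : Type*} (elt : Sym2 V → Sym2 V → Prop) (s : Set V) :
    Sym2 s → Sym2 s → Prop :=
  fun e₁ e₂ => elt (e₁.map Subtype.val) (e₂.map Subtype.val)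

/-- The graph `G_n` on `Fin n`: vertices `0` and `1` are adjacent to everything. -/
def GnGraph (n : ℕ) : SimpleGraph (Fin n) :=
  SimpleGraph.fromRel (fun a _ => a.val < 2)

/-- The complete bipartite graph `K_{2, n-2}` on `Fin n`, with parts `{0,1}` and the rest. -/
def K2Graph (n : ℕ) : SimpleGraph (Fin n) :=
  SimpleGraph.fromRel (fun a b => a.val < 2 ∧ 2 ≤ b.val)

/-- A set `S` of darts of `G` is a face of the triangulation `Δ_<` of `∂P_G`. -/
def IsFace {V : Type*} (G : SimpleGraph V) (elt : Sym2 V → Sym2 V → Prop)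
    (S : Set G.Dart) : Prop :=
  (¬ ∃ d ∈ S, d.symm ∈ S) ∧
    ∀ ℓ : ℕ, 2 ≤ ℓ → ∀ (u : V) (w : G.Walk u u), w.IsCycle →
      (w.length = 2 * ℓ - 1 → Set.ncard {d ∈ S | d ∈ w.darts} < ℓ) ∧
      (w.length = 2 * ℓ →
        Set.ncard {d ∈ S | d ∈ w.darts ∧ ∃ e ∈ w.edges, elt e d.edge} < ℓ)

/-- The face complex `Δ_<` of `(G, <)`. -/
def faceCx {V : Type*} (G : SimpleGraph V) (elt : Sym2 V → Sym2 V → Prop) :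
    Set (Set G.Dart) :=
  {S | IsFace G elt S}

/-- The join of two simplicial complexes (given as families of faces on disjoint
vertex types). -/
def joinCx {A B : Type*} (F : Set (Set A)) (H : Set (Set B)) : Set (Set (A ⊕ B)) :=
  {S | ∃ F₁ ∈ F, ∃ H₁ ∈ H, S = Sum.inl '' F₁ ∪ Sum.inr '' H₁}

/-- The complex consisting of two disjoint vertices. -/
def twoPtCx : Set (Set (Fin 2)) :=
  {S | S = ∅ ∨ S = {0} ∨ S = {1}}

/-- Contraction of the edge `{v, w}` of a simplicial complex; `v` is identified with `w`. -/
def contractCx {A : Type*} (F : Set (Set A)) (v w : A) : Set (Set A) :=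
  {S | (S ∈ F ∧ v ∉ S) ∨ ∃ H ∈ F, v ∈ H ∧ S = (H \ {v}) ∪ {w}}

/-- Isomorphism of simplicial complexes: a bijection of vertex sets inducing a bijection
of faces. -/
def CxIso {A B : Type*} (F : Set (Set A)) (H : Set (Set B)) : Prop :=
  ∃ φ : A → B, Set.BijOn φ (⋃₀ F) (⋃₀ H) ∧
    (∀ S ∈ F, φ '' S ∈ H) ∧ (∀ T ∈ H, ∃ S ∈ F, φ '' S = T)

/-! ### Erdős–Rényi random graphs -/

/-- The probability weight of a fixed graph `G` in the Erdős–Rényi model `G(n,p)`. -/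
noncomputable def graphWeight (n : ℕ) (p : ℝ) (G : SimpleGraph (Fin n)) : ℝ :=
  p ^ G.edgeSet.ncard * (1 - p) ^ (n.choose 2 - G.edgeSet.ncard)

/-- The probability of an event `A` in the Erdős–Rényi model `G(n,p)`. -/
noncomputable def erProb (n : ℕ) (p : ℝ) (A : Set (SimpleGraph (Fin n))) : ℝ :=
  ∑ G : SimpleGraph (Fin n), A.indicator (graphWeight n p) G

/-- The expectation of a random variable in the Erdős–Rényi model `G(n,p)`. -/
noncomputable def erExp (n : ℕ) (p : ℝ) (X : SimpleGraph (Fin n) → ℝ) : ℝ :=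
  ∑ G : SimpleGraph (Fin n), graphWeight n p G * X G

/-- The variance of a random variable in the Erdős–Rényi model `G(n,p)`. -/
noncomputable def erVar (n : ℕ) (p : ℝ) (X : SimpleGraph (Fin n) → ℝ) : ℝ :=
  erExp n p (fun G => (X G - erExp n p X) ^ 2)

/-- The number of cycles of `G` with exactly `k` vertices, counted via their edge sets. -/
noncomputable def numCycles {V : Type*} (G : SimpleGraph V) (k : ℕ) : ℕ :=
  Set.ncard {s : Set (Sym2 V) |
    ∃ (u : V) (w : G.Walk u u), w.IsCycle ∧ w.length = k ∧ s = {e | e ∈ w.edges}}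

/-- `E(X_k) = C(n,k)·((k−1)!/2)·p^k`, the expected number of `k`-cycles. -/
noncomputable def expCycles (n : ℕ) (p : ℝ) (k : ℕ) : ℝ :=
  (n.choose k : ℝ) * ((Nat.factorial (k - 1) : ℝ) / 2) * p ^ k

/-- `E(X_E) = C(n,2)·p`, the expected number of edges. -/
noncomputable def expEdges (n : ℕ) (p : ℝ) : ℝ :=
  (n.choose 2 : ℝ) * p

/-- `n_{k-1}(G)`: the number of `k`-element non-faces of `Δ_<` containing no antipodal
pair. -/
noncomputable def numNonFaces {V : Type*} (G : SimpleGraph V)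
    (elt : Sym2 V → Sym2 V → Prop) (k : ℕ) : ℕ :=
  Set.ncard {S : Set G.Dart |
    S.ncard = k ∧ (¬ ∃ d ∈ S, d.symm ∈ S) ∧ ¬ IsFace G elt S}

/-- `f_{k-1}(G)`: the number of `k`-element faces of `Δ_<`. -/
noncomputable def numFaces {V : Type*} (G : SimpleGraph V)
    (elt : Sym2 V → Sym2 V → Prop) (k : ℕ) : ℕ :=
  Set.ncard {S : Set G.Dart | S.ncard = k ∧ IsFace G elt S}

/-- The generalized binomial coefficient `binom(x, ℓ)` for real `x`. -/
noncomputable def realChoose (x : ℝ) (ℓ : ℕ) : ℝ :=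
  (∏ i ∈ Finset.range ℓ, (x - i)) / (Nat.factorial ℓ)

/-- The recursively defined γ-numbers `γ_ℓ(G)`:
`γ_0 = 1` and
`γ_ℓ = f_{ℓ−1} − [t^{n−1−ℓ}] ∑_{i<ℓ} γ_i (t+1)^i (t+2)^{n−1−2i}`. -/
noncomputable def gammaRG (n : ℕ) (G : SimpleGraph (Fin n))
    (elt : Sym2 (Fin n) → Sym2 (Fin n) → Prop) : ℕ → ℤ := fun ℓ =>
  Nat.strongRecOn ℓ (fun ℓ ih =>
    if ℓ = 0 then (1 : ℤ)
    else
      (numFaces G elt ℓ : ℤ) -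
        Polynomial.coeff
          (∑ i ∈ (Finset.range ℓ).attach,
            Polynomial.C (ih i.1 (Finset.mem_range.mp i.2)) *
              ((Polynomial.X + 1) ^ (i.1 : ℕ) *
                (Polynomial.X + 2) ^ (n - 1 - 2 * i.1) : Polynomial ℤ))
          (n - 1 - ℓ))

open Filter in
lemma sum_eVec {n : ℕ} (a : Fin n → ℝ) (i j : Fin n) :
    ∑ t, a t * eVec i j t = a i - a j := by
  simp [eVec, mul_sub, Finset.sum_sub_distrib, mul_ite]

lemma eVec_self {n : ℕ} (u : Fin n) : eVec u u = 0 := by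
  funext t; simp [eVec]

lemma eVec_trans {n : ℕ} (i j k : Fin n) : eVec i j + eVec j k = eVec i k := by
  funext t; simp only [eVec, Pi.add_apply]; ring

lemma eVec_inj {n : ℕ} {i j k l : Fin n} (hij : i ≠ j) (hkl : k ≠ l)
    (h : eVec i j = eVec k l) : i = k ∧ j = l := by
  have h1 := congrFun h i
  have h2 := congrFun h j
  simp only [eVec] at h1 h2
  split_ifs at h1 h2 <;> simp_all <;> norm_num at *

noncomputable def fLin {n : ℕ} (a : Fin n → ℝ) : (Fin n → ℝ) →ₗ[ℝ] ℝ where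
  toFun := fun x => ∑ t, a t * x t
  map_add' := fun x y => by simp [mul_add, Finset.sum_add_distrib]
  map_smul' := fun c x => by simp [Finset.mul_sum]; ring_nf; simp [mul_assoc, mul_comm, mul_left_comm]

lemma faceChar {n : ℕ} (D : Set (Fin n → ℝ)) (a p q : Fin n → ℝ) (M : ℝ)
    (hpD : p ∈ D) (hqD : q ∈ D)
    (hub : ∀ x ∈ D, ∑ t, a t * x t ≤ M)
    (hp : ∑ t, a t * p t = M) (hq : ∑ t, a t * q t = M)
    (hmax : ∀ x ∈ D, ∑ t, a t * x t = M → x = p ∨ x = q) :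
    {x | x ∈ convexHull ℝ D ∧ ∀ y ∈ convexHull ℝ D, ∑ t, a t * y t ≤ ∑ t, a t * x t}
      = convexHull ℝ {p, q} := by
  have hlin : IsLinearMap ℝ (fun x : Fin n → ℝ => ∑ t, a t * x t) := (fLin a).isLinear
  have hubC : ∀ y ∈ convexHull ℝ D, ∑ t, a t * y t ≤ M :=
    fun y hy => convexHull_min hub (convex_halfSpace_le hlin M) hy
  have hpq : ∀ y ∈ convexHull ℝ ({p, q} : Set (Fin n → ℝ)), ∑ t, a t * y t = M := by
    intro y hy
    refine convexHull_min ?_ (convex_hyperplane hlin M) hy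
    rintro z (rfl | rfl) <;> assumption
  have hsub : ({p, q} : Set (Fin n → ℝ)) ⊆ D := by rintro z (rfl | rfl) <;> assumption
  ext x
  constructor
  · rintro ⟨hxP, hxmax⟩
    have hxM : ∑ t, a t * x t = M := by
      have h1 : M ≤ ∑ t, a t * x t := hp ▸ hxmax p (subset_convexHull ℝ D hpD)
      linarith [hubC x hxP]
    rw [_root_.convexHull_eq] at hxP
    obtain ⟨ι, t, w, z, hw0, hw1, hzD, hx⟩ := hxP
    classical
    have key : ∀ i ∈ t, w i ≠ 0 → z i ∈ ({p, q} : Set (Fin n → ℝ)) := by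
      intro i hi hwi
      by_contra hzi
      have hlt : ∑ s, a s * z i s < M := lt_of_le_of_ne (hub _ (hzD i hi)) (by
        intro hEq
        rcases hmax _ (hzD i hi) hEq with h | h <;> simp [h] at hzi)
      have hcm : x = ∑ j ∈ t, w j • z j := by rw [← hx, Finset.centerMass_eq_of_sum_1 _ _ hw1]
      have hfx : ∑ s, a s * x s = ∑ j ∈ t, w j * ∑ s, a s * z j s := by
        rw [hcm]
        simp only [Finset.sum_apply, Pi.smul_apply, smul_eq_mul, Finset.mul_sum]
        rw [Finset.sum_comm]
        refine Finset.sum_congr rfl fun j hj => ?_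
        refine Finset.sum_congr rfl fun s hs => ?_
        ring
      have hstrict : ∑ j ∈ t, w j * ∑ s, a s * z j s < ∑ j ∈ t, w j * M := by
        apply Finset.sum_lt_sum
        · intro j hj
          exact mul_le_mul_of_nonneg_left (hub _ (hzD j hj)) (hw0 j hj)
        · exact ⟨i, hi, by
            have : 0 < w i := lt_of_le_of_ne (hw0 i hi) (Ne.symm hwi)
            exact mul_lt_mul_of_pos_left hlt this⟩
      rw [← hfx, hxM, ← Finset.sum_mul, hw1, one_mul] at hstrict
      exact lt_irrefl _ hstrict
    have hx' : x = (t.filter (fun i => w i ≠ 0)).centerMass w z := by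
      rw [Finset.centerMass_filter_ne_zero, hx]
    rw [hx']
    apply Finset.centerMass_mem_convexHull
    · intro i hi; exact hw0 i (Finset.mem_filter.mp hi).1
    · rw [Finset.sum_filter_ne_zero, hw1]; norm_num
    · intro i hi
      exact key i (Finset.mem_filter.mp hi).1 (Finset.mem_filter.mp hi).2
  · intro hx
    refine ⟨convexHull_mono hsub hx, fun y hy => ?_⟩
    rw [hpq x hx]; exact hubC y hy

lemma eVec_le_one {n : ℕ} (i j t : Fin n) : eVec i j t ≤ 1 := by
  simp only [eVec]; split_ifs <;> norm_num

lemma neg_one_le_eVec {n : ℕ} (i j t : Fin n) : -1 ≤ eVec i j t := by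
  simp only [eVec]; split_ifs <;> norm_num

lemma eVec_eq_one {n : ℕ} {i j t : Fin n} (h : eVec i j t = 1) : t = i := by
  by_contra hc; simp only [eVec, if_neg hc] at h; split_ifs at h <;> norm_num at h

lemma eVec_eq_neg_one {n : ℕ} {i j t : Fin n} (h : eVec i j t = -1) : t = j := by
  by_contra hc; simp only [eVec, if_neg hc] at h; split_ifs at h <;> norm_num at h

lemma seg_mem_eq {n : ℕ} {i j k l x y : Fin n} (hij : i ≠ j) (hkl : k ≠ l) (hxy : x ≠ y)
    (h : eVec x y ∈ convexHull ℝ ({eVec i j, eVec k l} : Set (Fin n → ℝ))) :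
    eVec x y = eVec i j ∨ eVec x y = eVec k l := by
  rw [convexHull_pair] at h
  obtain ⟨u, v, hu, hv, huv, hsum⟩ := h
  have hX := congrFun hsum x
  have hY := congrFun hsum y
  simp only [Pi.add_apply, Pi.smul_apply, smul_eq_mul] at hX hY
  have hxx : eVec x y x = 1 := by simp [eVec, if_neg (Ne.symm hxy), hxy]
  have hyy : eVec x y y = -1 := by simp [eVec, if_neg (Ne.symm hxy), hxy]
  rw [hxx] at hX; rw [hyy] at hY
  rcases eq_or_lt_of_le hu with hu0 | hu0
  · right
    have hv1 : v = 1 := by linarith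
    rw [← hsum]; funext t; simp [← hu0, hv1]
  rcases eq_or_lt_of_le hv with hv0 | hv0
  · left
    have hu1 : u = 1 := by linarith
    rw [← hsum]; funext t; simp [← hv0, hu1]
  have h1 : eVec i j x = 1 := by
    nlinarith [eVec_le_one i j x, eVec_le_one k l x, neg_one_le_eVec i j x, neg_one_le_eVec k l x]
  have h2 : eVec k l x = 1 := by
    nlinarith [eVec_le_one i j x, eVec_le_one k l x, neg_one_le_eVec i j x, neg_one_le_eVec k l x]
  have h3 : eVec i j y = -1 := by
    nlinarith [eVec_le_one i j y, eVec_le_one k l y, neg_one_le_eVec i j y, neg_one_le_eVec k l y]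
  have h4 : eVec k l y = -1 := by
    nlinarith [eVec_le_one i j y, eVec_le_one k l y, neg_one_le_eVec i j y, neg_one_le_eVec k l y]
  left
  have hxi := eVec_eq_one h1
  have hyj := eVec_eq_neg_one h3
  rw [hxi, hyj]
lemma eVec_rev {n : ℕ} (i j : Fin n) : eVec j i = -eVec i j := by
  funext t; simp only [eVec, Pi.neg_apply]; ring

lemma walk_sum {n : ℕ} {G : SimpleGraph (Fin n)} {u v : Fin n} (w : G.Walk u v) :
    (w.darts.map (fun d => eVec d.fst d.snd)).sum = eVec u v := by
  induction w with
  | nil => simp [eVec_self]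
  | cons h p ih =>
    rw [Walk.darts_cons, List.map_cons, List.sum_cons, ih]
    exact eVec_trans _ _ _

lemma extract2 {α : Type*} [DecidableEq α] {L : List α} {a b : α} (hN : L.Nodup)
    (ha : a ∈ L) (hb : b ∈ L) (hab : a ≠ b) :
    ∃ R : Multiset α, (L : Multiset α) = a ::ₘ b ::ₘ R ∧
      Multiset.card R = L.length - 2 ∧ ∀ c ∈ R, c ∈ L ∧ c ≠ a ∧ c ≠ b := by
  have hmN : Multiset.Nodup (L : Multiset α) := by exact_mod_cast hN
  have ham : a ∈ (L : Multiset α) := by exact_mod_cast ha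
  have hbm : b ∈ (L : Multiset α).erase a :=
    (Multiset.mem_erase_of_ne (Ne.symm hab)).mpr (by exact_mod_cast hb)
  refine ⟨((L : Multiset α).erase a).erase b, ?_, ?_, ?_⟩
  · rw [Multiset.cons_erase hbm, Multiset.cons_erase ham]
  · rw [Multiset.card_erase_of_mem hbm, Multiset.card_erase_of_mem ham]
    simp [Multiset.coe_card]; omega
  · intro c hc
    have hc1 : c ∈ (L : Multiset α).erase a := Multiset.mem_of_mem_erase hc
    have hc2 : c ∈ (L : Multiset α) := Multiset.mem_of_mem_erase hc1
    refine ⟨by exact_mod_cast hc2, ?_, ?_⟩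
    · rintro rfl; exact hmN.not_mem_erase hc1
    · rintro rfl; exact (hmN.erase a).not_mem_erase hc

lemma sum_apply_eVec {n : ℕ} (a : Fin n → ℝ) (x : Fin n → ℝ) (i j : Fin n)
    (h : x = eVec i j) : ∑ t, a t * x t = a i - a j := by rw [h, sum_eVec]

lemma forward {n : ℕ} (G : SimpleGraph (Fin n)) (i j k l : Fin n)
    (hij : G.Adj i j) (hkl : G.Adj k l) (hne : s(i, j) ≠ s(k, l)) (a : Fin n → ℝ)
    (hface : {x | x ∈ symEdgePolytope G ∧
        ∀ y ∈ symEdgePolytope G, ∑ t, a t * y t ≤ ∑ t, a t * x t} =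
      convexHull ℝ {eVec i j, eVec k l})
    (m : ℕ) (hm : m = 3 ∨ m = 4)
    (hc : ∃ (u : Fin n) (w : G.Walk u u), w.IsCycle ∧ w.length = m ∧
      (⟨(i, j), hij⟩ : G.Dart) ∈ w.darts ∧ (⟨(k, l), hkl⟩ : G.Dart) ∈ w.darts) :
    False := by
  classical
  set D : Set (Fin n → ℝ) := {x | ∃ i j, G.Adj i j ∧ x = eVec i j} with hD
  have hPD : symEdgePolytope G = convexHull ℝ D := rfl
  set p := eVec i j with hp
  set q := eVec k l with hq
  have hpD : p ∈ D := ⟨i, j, hij, rfl⟩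
  have hqD : q ∈ D := ⟨k, l, hkl, rfl⟩
  have hmemD : ∀ x ∈ D, x ∈ symEdgePolytope G := fun x hx => subset_convexHull ℝ D hx
  have hpF : p ∈ {x | x ∈ symEdgePolytope G ∧
      ∀ y ∈ symEdgePolytope G, ∑ t, a t * y t ≤ ∑ t, a t * x t} := by
    rw [hface]; exact subset_convexHull ℝ _ (by left; rfl)
  have hqF : q ∈ {x | x ∈ symEdgePolytope G ∧
      ∀ y ∈ symEdgePolytope G, ∑ t, a t * y t ≤ ∑ t, a t * x t} := by
    rw [hface]; exact subset_convexHull ℝ _ (by right; rfl)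
  set M : ℝ := ∑ t, a t * p t with hM
  have hub : ∀ y ∈ symEdgePolytope G, ∑ t, a t * y t ≤ M := hpF.2
  have hqM : ∑ t, a t * q t = M :=
    le_antisymm (hub q (hmemD q hqD)) (hqF.2 p (hmemD p hpD))
  have h0P : (0 : Fin n → ℝ) ∈ symEdgePolytope G := by
    have hmem2 : eVec j i ∈ symEdgePolytope G := hmemD _ ⟨j, i, hij.symm, rfl⟩
    have := (convex_convexHull ℝ D) (hmemD p hpD) hmem2
      (by norm_num : (0:ℝ) ≤ 1/2) (by norm_num : (0:ℝ) ≤ 1/2) (by norm_num)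
    have heq : (1/2 : ℝ) • p + (1/2 : ℝ) • eVec j i = 0 := by
      rw [eVec_rev]; funext t; simp [hp]
    rwa [heq] at this
  have hM0 : 0 ≤ M := by
    have := hub 0 h0P
    simpa using this
  obtain ⟨u, w, hcyc, hlen, hA, hB⟩ := hc
  set A : G.Dart := ⟨(i, j), hij⟩ with hAdef
  set B : G.Dart := ⟨(k, l), hkl⟩ with hBdef
  have hedN : (w.darts.map SimpleGraph.Dart.edge).Nodup := hcyc.edges_nodup
  have hdN : w.darts.Nodup := hedN.of_map
  have hAB : A ≠ B := fun h => hne (congrArg SimpleGraph.Dart.edge h)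
  obtain ⟨R, hsplit, hcard, hmem⟩ := extract2 hdN hA hB hAB
  have hlen' : w.darts.length = m := by rw [Walk.length_darts, hlen]
  rw [hlen'] at hcard
  have hsum0 : (Multiset.map (fun d : G.Dart => eVec d.fst d.snd) (w.darts : Multiset G.Dart)).sum
      = 0 := by
    rw [Multiset.map_coe, Multiset.sum_coe, walk_sum, eVec_self]
  rw [hsplit] at hsum0
  simp only [Multiset.map_cons, Multiset.sum_cons] at hsum0
  -- helper to derive the contradiction from a dart c in R whose reverse lies on the face
  have key : ∀ c ∈ R, eVec c.snd c.fst ∈ convexHull ℝ ({p, q} : Set (Fin n → ℝ)) → False := by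
    intro c hcR hcconv
    have hcadj : G.Adj c.fst c.snd := c.adj
    rcases seg_mem_eq hij.ne hkl.ne hcadj.ne' hcconv with h | h
    · obtain ⟨h1, h2⟩ := eVec_inj hcadj.ne' hij.ne h
      have hcA : SimpleGraph.Dart.edge c = SimpleGraph.Dart.edge A := by
        show s(c.fst, c.snd) = s(i, j)
        rw [← h1, ← h2]; exact Sym2.eq_swap
      have : c = A := List.inj_on_of_nodup_map hedN (hmem c hcR).1 hA hcA
      exact (hmem c hcR).2.1 this
    · obtain ⟨h1, h2⟩ := eVec_inj hcadj.ne' hkl.ne h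
      have hcB : SimpleGraph.Dart.edge c = SimpleGraph.Dart.edge B := by
        show s(c.fst, c.snd) = s(k, l)
        rw [← h1, ← h2]; exact Sym2.eq_swap
      have : c = B := List.inj_on_of_nodup_map hedN (hmem c hcR).1 hB hcB
      exact (hmem c hcR).2.2 this
  rcases hm with rfl | rfl
  · -- m = 3
    obtain ⟨c, rfl⟩ := Multiset.card_eq_one.mp hcard
    simp only [Multiset.map_singleton, Multiset.sum_singleton] at hsum0
    -- hsum0 : eVec A.fst A.snd + (eVec B.fst B.snd + eVec c.fst c.snd) = 0
    have hrc : eVec c.snd c.fst = p + q := by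
      rw [eVec_rev]
      have : eVec c.fst c.snd = -(p + q) := by
        rw [hp, hq]
        linear_combination hsum0
      rw [this, neg_neg]
    have hrcD : eVec c.snd c.fst ∈ D := ⟨c.snd, c.fst, c.adj.symm, rfl⟩
    have hfrc : ∑ t, a t * (eVec c.snd c.fst) t = 2 * M := by
      rw [sum_eVec]
      have e1 : a i - a j = M := by rw [hM, hp, sum_eVec]
      have e2 : a k - a l = M := by rw [← hqM, hq, sum_eVec]
      have e3 : (a A.fst - a A.snd) + ((a B.fst - a B.snd) + (a c.fst - a c.snd)) = 0 := by
        have := congrArg (fun x => ∑ t, a t * x t) hsum0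
        simpa [Pi.add_apply, mul_add, Finset.sum_add_distrib, sum_eVec] using this
      have eA : a A.fst - a A.snd = a i - a j := rfl
      have eB : a B.fst - a B.snd = a k - a l := rfl
      rw [eA, eB] at e3
      linarith
    have hle : ∑ t, a t * (eVec c.snd c.fst) t ≤ M := hub _ (hmemD _ hrcD)
    have hMz : M = 0 := by linarith
    have : eVec c.snd c.fst ∈ {x | x ∈ symEdgePolytope G ∧
        ∀ y ∈ symEdgePolytope G, ∑ t, a t * y t ≤ ∑ t, a t * x t} := by
      refine ⟨hmemD _ hrcD, fun y hy => ?_⟩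
      rw [hfrc, hMz]; simpa [hMz] using hub y hy
    rw [hface] at this
    exact key c (Multiset.mem_singleton_self c) this
  · -- m = 4
    obtain ⟨c, d, rfl⟩ := Multiset.card_eq_two.mp hcard
    simp only [Multiset.insert_eq_cons, Multiset.map_cons, Multiset.sum_cons,
      Multiset.map_singleton, Multiset.sum_singleton] at hsum0
    have e1 : a i - a j = M := by rw [hM, hp, sum_eVec]
    have e2 : a k - a l = M := by rw [← hqM, hq, sum_eVec]
    have e3 : (a i - a j) + ((a k - a l) + ((a c.fst - a c.snd) + (a d.fst - a d.snd))) = 0 := by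
      have := congrArg (fun x => ∑ t, a t * x t) hsum0
      simpa [Pi.add_apply, mul_add, Finset.sum_add_distrib, sum_eVec] using this
    have hrcD : eVec c.snd c.fst ∈ D := ⟨c.snd, c.fst, c.adj.symm, rfl⟩
    have hrdD : eVec d.snd d.fst ∈ D := ⟨d.snd, d.fst, d.adj.symm, rfl⟩
    have hlec : ∑ t, a t * (eVec c.snd c.fst) t ≤ M := hub _ (hmemD _ hrcD)
    have hled : ∑ t, a t * (eVec d.snd d.fst) t ≤ M := hub _ (hmemD _ hrdD)
    rw [sum_eVec] at hlec hled
    have hceq : a c.snd - a c.fst = M := by linarith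
    have : eVec c.snd c.fst ∈ {x | x ∈ symEdgePolytope G ∧
        ∀ y ∈ symEdgePolytope G, ∑ t, a t * y t ≤ ∑ t, a t * x t} := by
      refine ⟨hmemD _ hrcD, fun y hy => ?_⟩
      rw [sum_eVec, hceq]; exact hub y hy
    rw [hface] at this
    exact key c (by simp) this

lemma isCycle3 {V : Type*} {G : SimpleGraph V} {x y z : V}
    (h1 : G.Adj x y) (h2 : G.Adj y z) (h3 : G.Adj z x) :
    (Walk.cons h1 (Walk.cons h2 (Walk.cons h3 Walk.nil))).IsCycle := by
  have hxy := h1.ne; have hyz := h2.ne; have hzx := h3.ne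
  rw [Walk.isCycle_def]
  refine ⟨?_, by simp, ?_⟩
  · rw [Walk.isTrail_def]
    simp [Sym2.eq_iff]
    tauto
  · simp [List.nodup_cons]
    tauto

lemma isCycle4 {V : Type*} {G : SimpleGraph V} {x y z w : V}
    (h1 : G.Adj x y) (h2 : G.Adj y z) (h3 : G.Adj z w) (h4 : G.Adj w x)
    (hxz : x ≠ z) (hyw : y ≠ w) :
    (Walk.cons h1 (Walk.cons h2 (Walk.cons h3 (Walk.cons h4 Walk.nil)))).IsCycle := by
  have hxy := h1.ne; have hyz := h2.ne; have hzw := h3.ne; have hwx := h4.ne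
  rw [Walk.isCycle_def]
  refine ⟨?_, by simp, ?_⟩
  · rw [Walk.isTrail_def]
    simp [Sym2.eq_iff]
    tauto
  · simp [List.nodup_cons]
    tauto
-- case i = k
lemma constructSameTail {n : ℕ} (G : SimpleGraph (Fin n)) (i j l : Fin n)
    (hij : G.Adj i j) (hil : G.Adj i l) (hjl : j ≠ l) :
    ∃ a : Fin n → ℝ, (∀ u v, G.Adj u v → a u - a v ≤ 8) ∧
      (∀ u v, G.Adj u v → a u - a v = 8 → (u = i ∧ v = j) ∨ (u = i ∧ v = l)) ∧
      a i - a j = 8 ∧ a i - a l = 8 := by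
  classical
  set a : Fin n → ℝ := fun v => if v = i then 4 else if v = j then -4 else if v = l then -4 else 0
    with ha
  have hai : a i = 4 := by simp [ha]
  have haj : a j = -4 := by simp [ha, hij.ne']
  have hal : a l = -4 := by simp [ha, hil.ne', hjl.symm]
  have hbd : ∀ v, -4 ≤ a v ∧ a v ≤ 4 := by
    intro v; rw [ha]; simp only
    split_ifs <;> norm_num
  have hoth : ∀ v, v ≠ i → v ≠ j → v ≠ l → a v = 0 := by
    intro v h1 h2 h3; rw [ha]; simp [h1, h2, h3]
  refine ⟨a, ?_, ?_, by rw [hai, haj]; norm_num, by rw [hai, hal]; norm_num⟩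
  · intro u v huv
    rcases hbd u with ⟨_, hu2⟩; rcases hbd v with ⟨hv1, _⟩
    linarith
  · intro u v huv h8
    rcases hbd u with ⟨hu1, hu2⟩; rcases hbd v with ⟨hv1, hv2⟩
    have hui : u = i := by
      by_contra hui
      by_cases h2 : u = j
      · rw [h2, haj] at h8; linarith
      · by_cases h3 : u = l
        · rw [h3, hal] at h8; linarith
        · rw [hoth u hui h2 h3] at h8; linarith
    rw [hui, hai] at h8
    by_cases h2 : v = j
    · exact Or.inl ⟨hui, h2⟩
    by_cases h3 : v = l
    · exact Or.inr ⟨hui, h3⟩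
    have hvi : v ≠ i := by rw [hui] at huv; exact huv.ne'
    rw [hoth v hvi h2 h3] at h8; linarith

-- case j = l : darts i→j and k→j
lemma constructSameHead {n : ℕ} (G : SimpleGraph (Fin n)) (i j k : Fin n)
    (hij : G.Adj i j) (hkj : G.Adj k j) (hik : i ≠ k) :
    ∃ a : Fin n → ℝ, (∀ u v, G.Adj u v → a u - a v ≤ 8) ∧
      (∀ u v, G.Adj u v → a u - a v = 8 → (u = i ∧ v = j) ∨ (u = k ∧ v = j)) ∧
      a i - a j = 8 ∧ a k - a j = 8 := by
  classical
  set a : Fin n → ℝ := fun v => if v = j then -4 else if v = i then 4 else if v = k then 4 else 0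
    with ha
  have haj : a j = -4 := by simp [ha]
  have hai : a i = 4 := by simp [ha, hij.ne]
  have hak : a k = 4 := by simp [ha, hkj.ne, hik.symm]
  have hbd : ∀ v, -4 ≤ a v ∧ a v ≤ 4 := by
    intro v; rw [ha]; simp only; split_ifs <;> norm_num
  have hoth : ∀ v, v ≠ i → v ≠ j → v ≠ k → a v = 0 := by
    intro v h1 h2 h3; rw [ha]; simp [h1, h2, h3]
  refine ⟨a, ?_, ?_, by rw [hai, haj]; norm_num, by rw [hak, haj]; norm_num⟩
  · intro u v huv
    rcases hbd u with ⟨_, hu2⟩; rcases hbd v with ⟨hv1, _⟩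
    linarith
  · intro u v huv h8
    have hvj : v = j := by
      by_contra hvj
      rcases hbd u with ⟨_, hu2⟩
      by_cases h1 : v = i
      · rw [h1, hai] at h8; linarith
      by_cases h3 : v = k
      · rw [h3, hak] at h8; linarith
      rw [hoth v h1 hvj h3] at h8; linarith
    rw [hvj, haj] at h8
    by_cases h1 : u = i
    · exact Or.inl ⟨h1, hvj⟩
    by_cases h3 : u = k
    · exact Or.inr ⟨h3, hvj⟩
    have huj : u ≠ j := by rw [hvj] at huv; exact huv.ne
    rw [hoth u h1 huj h3] at h8; linarith

-- case j = k : darts i→j and j→l (a path i→j→l)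
lemma constructPath {n : ℕ} (G : SimpleGraph (Fin n)) (i j l : Fin n)
    (hij : G.Adj i j) (hjl : G.Adj j l) (hil : i ≠ l)
    (hnli : ¬ G.Adj l i)
    (hcom : ∀ x, x ≠ j → ¬(G.Adj x i ∧ G.Adj x l)) :
    ∃ a : Fin n → ℝ, (∀ u v, G.Adj u v → a u - a v ≤ 8) ∧
      (∀ u v, G.Adj u v → a u - a v = 8 → (u = i ∧ v = j) ∨ (u = j ∧ v = l)) ∧
      a i - a j = 8 ∧ a j - a l = 8 := by
  classical
  set a : Fin n → ℝ := fun v => if v = i then 8 else if v = j then 0 else if v = l then -8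
    else if G.Adj v i then 2 else if G.Adj v l then -2 else 0 with ha
  have hai : a i = 8 := by simp [ha]
  have haj : a j = 0 := by simp [ha, hij.ne']
  have hal : a l = -8 := by simp [ha, hil.symm, hjl.ne']
  have hoth : ∀ v, v ≠ i → v ≠ j → v ≠ l →
      (G.Adj v i → a v = 2) ∧ (¬G.Adj v i → G.Adj v l → a v = -2) ∧
      (¬G.Adj v i → ¬G.Adj v l → a v = 0) := by
    intro v h1 h2 h3
    refine ⟨fun h => ?_, fun h h' => ?_, fun h h' => ?_⟩ <;>
      · rw [ha]; simp only [if_neg h1, if_neg h2, if_neg h3]; split_ifs <;> first | rfl | tauto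
  have hbd : ∀ v, v ≠ i → v ≠ l → -2 ≤ a v ∧ a v ≤ 2 := by
    intro v h1 h3; rw [ha]; simp only [if_neg h1, if_neg h3]
    split_ifs <;> norm_num
  have key : ∀ u v, G.Adj u v → (a u - a v ≤ 8 ∧
      (a u - a v = 8 → (u = i ∧ v = j) ∨ (u = j ∧ v = l))) := by
    intro u v huv
    by_cases hui : u = i
    · -- u = i
      by_cases hvl : v = l
      · exfalso; rw [hui, hvl] at huv; exact hnli huv.symm
      by_cases hvj : v = j
      · rw [hui, hvj, hai, haj]; exact ⟨by norm_num, fun _ => Or.inl ⟨rfl, rfl⟩⟩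
      · have hvi : v ≠ i := by rw [hui] at huv; exact huv.ne'
        have hv2 : a v = 2 := (hoth v hvi hvj hvl).1 (by rw [hui] at huv; exact huv.symm)
        rw [hui, hai, hv2]; exact ⟨by norm_num, fun h => by norm_num at h⟩
    · by_cases hvl : v = l
      · by_cases huj : u = j
        · rw [huj, hvl, haj, hal]; exact ⟨by norm_num, fun _ => Or.inr ⟨rfl, rfl⟩⟩
        · have hul : u ≠ l := by rw [hvl] at huv; exact huv.ne
          have hua : ¬ G.Adj u i := fun h => hcom u huj ⟨h, by rw [hvl] at huv; exact huv⟩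
          have hu2 : a u = -2 := (hoth u hui huj hul).2.1 hua (by rw [hvl] at huv; exact huv)
          rw [hvl, hu2, hal]; exact ⟨by norm_num, fun h => by norm_num at h⟩
      · -- u ≠ i, v ≠ l : both values in [-2,2] except u could be j/l, v could be i/j
        have hvi8 : a v ≥ -2 ∨ v = i ∨ v = j := by
          by_cases h1 : v = i; · tauto
          by_cases h2 : v = j; · tauto
          exact Or.inl (hbd v h1 hvl).1
        have hu8 : a u ≤ 2 ∨ u = j ∨ u = l := by
          by_cases h1 : u = j; · tauto
          by_cases h2 : u = l; · tauto
          exact Or.inl (hbd u hui h2).2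
        have hau : a u ≤ 2 := by
          rcases hu8 with h | h | h
          · exact h
          · rw [h, haj]; norm_num
          · rw [h, hal]; norm_num
        have hav : -2 ≤ a v ∨ v = i := by
          rcases hvi8 with h | h | h
          · exact Or.inl h
          · exact Or.inr h
          · rw [h, haj]; norm_num
        rcases hav with h | h
        · exact ⟨by linarith, fun h8 => by linarith⟩
        · rw [h, hai]; exact ⟨by linarith, fun h8 => by linarith⟩
  exact ⟨a, fun u v huv => (key u v huv).1, fun u v huv => (key u v huv).2,
    by rw [hai, haj]; norm_num, by rw [haj, hal]; norm_num⟩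
-- case all four distinct
lemma constructDistinct {n : ℕ} (G : SimpleGraph (Fin n)) (i j k l : Fin n)
    (hij : G.Adj i j) (hkl : G.Adj k l)
    (hik : i ≠ k) (hil : i ≠ l) (hjk : j ≠ k) (hjl : j ≠ l)
    (hC : ¬(G.Adj j k ∧ G.Adj l i)) :
    ∃ a : Fin n → ℝ, (∀ u v, G.Adj u v → a u - a v ≤ 8) ∧
      (∀ u v, G.Adj u v → a u - a v = 8 → (u = i ∧ v = j) ∨ (u = k ∧ v = l)) ∧
      a i - a j = 8 ∧ a k - a l = 8 := by
  classical
  obtain ⟨δ, hδ1, hjkδ, hliδ⟩ :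
      ∃ δ : ℝ, (δ = 1 ∨ δ = -1) ∧ (G.Adj j k → δ = -1) ∧ (G.Adj l i → δ = 1) := by
    by_cases h : G.Adj j k
    · exact ⟨-1, Or.inr rfl, fun _ => rfl, fun h' => absurd ⟨h, h'⟩ hC⟩
    · exact ⟨1, Or.inl rfl, fun h' => absurd h' h, fun _ => rfl⟩
  set a : Fin n → ℝ := fun v =>
    if v = i then 4 else if v = j then -4 else if v = k then 4 + δ else if v = l then -4 + δ
    else if G.Adj v i ∨ G.Adj v k then (if G.Adj v j ∨ G.Adj v l then 0 else 2)
    else if G.Adj v j ∨ G.Adj v l then -2 else 0 with ha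
  have hai : a i = 4 := by simp [ha]
  have haj : a j = -4 := by simp [ha, hij.ne']
  have hak : a k = 4 + δ := by simp [ha, hik.symm, hjk.symm]
  have hal : a l = -4 + δ := by simp [ha, hil.symm, hjl.symm, hkl.ne']
  have hoth : ∀ v, v ≠ i → v ≠ j → v ≠ k → v ≠ l →
      (-2 ≤ a v ∧ a v ≤ 2) ∧ ((G.Adj v i ∨ G.Adj v k) → 0 ≤ a v) ∧
        ((G.Adj v j ∨ G.Adj v l) → a v ≤ 0) := by
    intro v h1 h2 h3 h4
    rw [ha]; simp only [if_neg h1, if_neg h2, if_neg h3, if_neg h4]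
    split_ifs <;> norm_num <;> tauto
  have hlow : ∀ v, -5 ≤ a v := by
    intro v; rw [ha]; simp only
    split_ifs <;> rcases hδ1 with rfl | rfl <;> norm_num
  have key : ∀ u v, G.Adj u v → (a u - a v ≤ 8 ∧
      (a u - a v = 8 → (u = i ∧ v = j) ∨ (u = k ∧ v = l))) := by
    intro u v huv
    by_cases hui : u = i
    · subst hui
      have hvne : v ≠ u := huv.ne'
      by_cases hvj : v = j
      · rw [hvj, hai, haj]; exact ⟨by norm_num, fun _ => Or.inl ⟨rfl, rfl⟩⟩
      by_cases hvk : v = k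
      · rw [hvk, hai, hak]
        rcases hδ1 with rfl | rfl <;> exact ⟨by norm_num, fun h => by norm_num at h⟩
      by_cases hvl : v = l
      · have hδ' : δ = 1 := hliδ (by rw [hvl] at huv; exact huv.symm)
        rw [hvl, hai, hal, hδ']; exact ⟨by norm_num, fun h => by norm_num at h⟩
      · rcases hoth v hvne hvj hvk hvl with ⟨⟨hb1, hb2⟩, hplus, _⟩
        have := hplus (Or.inl huv.symm)
        rw [hai]; exact ⟨by linarith, fun h => by linarith⟩
    by_cases huk : u = k
    · subst huk
      have hvne : v ≠ u := huv.ne'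
      by_cases hvl : v = l
      · rw [hvl, hak, hal]; exact ⟨by norm_num, fun _ => Or.inr ⟨rfl, rfl⟩⟩
      by_cases hvi : v = i
      · rw [hvi, hak, hai]
        rcases hδ1 with rfl | rfl <;> exact ⟨by norm_num, fun h => by norm_num at h⟩
      by_cases hvj : v = j
      · have hδ' : δ = -1 := hjkδ (by rw [hvj] at huv; exact huv.symm)
        rw [hvj, hak, haj, hδ']; exact ⟨by norm_num, fun h => by norm_num at h⟩
      · rcases hoth v hvi hvj hvne hvl with ⟨⟨hb1, hb2⟩, hplus, _⟩
        have := hplus (Or.inr huv.symm)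
        rw [hak]; rcases hδ1 with rfl | rfl <;> exact ⟨by linarith, fun h => by linarith⟩
    · -- u ∉ {i, k} : a u ≤ 2 always (j : -4, l : -4+δ ≤ -3, other : ≤ 2)
      have hau : a u ≤ 2 := by
        by_cases h2 : u = j
        · rw [h2, haj]; norm_num
        by_cases h4 : u = l
        · rw [h4, hal]; rcases hδ1 with rfl | rfl <;> norm_num
        · exact (hoth u hui h2 huk h4).1.2
      exact ⟨by linarith [hlow v], fun h => by linarith [hlow v]⟩
  exact ⟨a, fun u v huv => (key u v huv).1, fun u v huv => (key u v huv).2,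
    by rw [hai, haj]; norm_num, by rw [hak, hal]; norm_num⟩
lemma buildFace {n : ℕ} (G : SimpleGraph (Fin n)) (i j k l : Fin n)
    (hij : G.Adj i j) (hkl : G.Adj k l) (a : Fin n → ℝ)
    (hbd : ∀ u v, G.Adj u v → a u - a v ≤ 8)
    (hmax8 : ∀ u v, G.Adj u v → a u - a v = 8 → (u = i ∧ v = j) ∨ (u = k ∧ v = l))
    (hpi : a i - a j = 8) (hqk : a k - a l = 8) :
    {x | x ∈ symEdgePolytope G ∧
        ∀ y ∈ symEdgePolytope G, ∑ t, a t * y t ≤ ∑ t, a t * x t} =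
      convexHull ℝ {eVec i j, eVec k l} := by
  have hub : ∀ x ∈ {x | ∃ u v, G.Adj u v ∧ x = eVec u v}, ∑ t, a t * x t ≤ 8 := by
    rintro x ⟨u, v, huv, rfl⟩; rw [sum_eVec]; exact hbd u v huv
  have hmax : ∀ x ∈ {x | ∃ u v, G.Adj u v ∧ x = eVec u v}, ∑ t, a t * x t = 8 →
      x = eVec i j ∨ x = eVec k l := by
    rintro x ⟨u, v, huv, rfl⟩ h8
    rw [sum_eVec] at h8
    rcases hmax8 u v huv h8 with ⟨h1, h2⟩ | ⟨h1, h2⟩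
    · left; rw [h1, h2]
    · right; rw [h1, h2]
  exact faceChar {x | ∃ u v, G.Adj u v ∧ x = eVec u v} a (eVec i j) (eVec k l) 8
    ⟨i, j, hij, rfl⟩ ⟨k, l, hkl, rfl⟩ hub (by rw [sum_eVec]; exact hpi)
    (by rw [sum_eVec]; exact hqk) hmax

theorem stmt0 {n : ℕ} (G : SimpleGraph (Fin n)) (i j k l : Fin n)
    (hij : G.Adj i j) (hkl : G.Adj k l) (hne : s(i, j) ≠ s(k, l)) :
    (∃ a : Fin n → ℝ,
        {x | x ∈ symEdgePolytope G ∧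
            ∀ y ∈ symEdgePolytope G, ∑ t, a t * y t ≤ ∑ t, a t * x t} =
          convexHull ℝ {eVec i j, eVec k l}) ↔
      ¬ ∃ m, (m = 3 ∨ m = 4) ∧ dartsInCycle G ⟨(i, j), hij⟩ ⟨(k, l), hkl⟩ m := by
  constructor
  · rintro ⟨a, hface⟩ ⟨m, hm, hc⟩
    exact forward G i j k l hij hkl hne a hface m hm hc
  · intro hNC
    by_cases hjk : j = k
    · -- path case i → j → l with j = k
      subst hjk
      have hil : i ≠ l := by rintro rfl; exact hne Sym2.eq_swap
      have hnli : ¬ G.Adj l i := by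
        intro h
        refine hNC ⟨3, Or.inl rfl, i, Walk.cons hij (Walk.cons hkl (Walk.cons h Walk.nil)),
          isCycle3 hij hkl h, by simp, ?_, ?_⟩ <;> simp [Walk.darts_cons]
      have hcom : ∀ x, x ≠ j → ¬(G.Adj x i ∧ G.Adj x l) := by
        rintro x hxj ⟨h1, h2⟩
        refine hNC ⟨4, Or.inr rfl, i,
          Walk.cons hij (Walk.cons hkl (Walk.cons h2.symm (Walk.cons h1 Walk.nil))),
          isCycle4 hij hkl h2.symm h1 hil hxj.symm, by simp, ?_, ?_⟩ <;> simp [Walk.darts_cons]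
      obtain ⟨a, h1, h2, h3, h4⟩ := constructPath G i j l hij hkl hil hnli hcom
      exact ⟨a, buildFace G i j j l hij hkl a h1 h2 h3 h4⟩
    by_cases hil2 : i = l
    · -- path case k → i → j with i = l
      subst hil2
      have hkj : k ≠ j := by rintro rfl; exact hne Sym2.eq_swap
      have hnjk : ¬ G.Adj j k := by
        intro h
        refine hNC ⟨3, Or.inl rfl, k, Walk.cons hkl (Walk.cons hij (Walk.cons h Walk.nil)),
          isCycle3 hkl hij h, by simp, ?_, ?_⟩ <;> simp [Walk.darts_cons]
      have hcom : ∀ x, x ≠ i → ¬(G.Adj x k ∧ G.Adj x j) := by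
        rintro x hxi ⟨h1, h2⟩
        refine hNC ⟨4, Or.inr rfl, k,
          Walk.cons hkl (Walk.cons hij (Walk.cons h2.symm (Walk.cons h1 Walk.nil))),
          isCycle4 hkl hij h2.symm h1 hkj hxi.symm, by simp, ?_, ?_⟩ <;> simp [Walk.darts_cons]
      obtain ⟨a, h1, h2, h3, h4⟩ := constructPath G k i j hkl hij hkj hnjk hcom
      exact ⟨a, buildFace G i j k i hij hkl a h1
        (fun u v huv h8 => (h2 u v huv h8).symm) h4 h3⟩
    by_cases hik2 : i = k
    · -- same tail
      subst hik2
      have hjl : j ≠ l := by rintro rfl; exact hne rfl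
      obtain ⟨a, h1, h2, h3, h4⟩ := constructSameTail G i j l hij hkl hjl
      exact ⟨a, buildFace G i j i l hij hkl a h1 h2 h3 h4⟩
    by_cases hjl2 : j = l
    · -- same head
      subst hjl2
      obtain ⟨a, h1, h2, h3, h4⟩ := constructSameHead G i j k hij hkl hik2
      exact ⟨a, buildFace G i j k j hij hkl a h1 h2 h3 h4⟩
    · -- all distinct
      have hC : ¬(G.Adj j k ∧ G.Adj l i) := by
        rintro ⟨h1, h2⟩
        refine hNC ⟨4, Or.inr rfl, i,
          Walk.cons hij (Walk.cons h1 (Walk.cons hkl (Walk.cons h2 Walk.nil))),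
          isCycle4 hij h1 hkl h2 hik2 hjl2, by simp, ?_, ?_⟩ <;> simp [Walk.darts_cons]
      obtain ⟨a, h1, h2, h3, h4⟩ :=
        constructDistinct G i j k l hij hkl hik2 hil2 hjk hjl2 hC
      exact ⟨a, buildFace G i j k l hij hkl a h1 h2 h3 h4⟩

end SEP
end

section
/- Let G = ([n],E) be a 2-connected graph and let e ∈ E be an edge that is contained in no 3-cycle and in no 4-cycle of G. Then for every total order < on E, with <' denoting its restriction to E∖{e}, one has γ₂(G,<) = γ₂(G∖e,<') + 4·cy(G) + 2 > γ₂(G∖e,<'). -/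
open SimpleGraph Finset Filter

namespace SEP

/-! ### Auxiliary lemmas for `stmt3` -/

section Aux

open SimpleGraph

lemma SEP_darts_map_transfer {V : Type*} {G H : SimpleGraph V} {u v : V} (w : G.Walk u v)
    (h : ∀ f ∈ w.edges, f ∈ H.edgeSet) :
    (w.transfer H h).darts.map SimpleGraph.Dart.toProd = w.darts.map SimpleGraph.Dart.toProd := by
  induction w with
  | nil => rfl
  | cons ha q ih => simp [Walk.transfer, ih]; exact congrArg (List.cons _) (ih _)

lemma SEP_mem_darts_transfer {V : Type*} {G H : SimpleGraph V} {u v : V} (w : G.Walk u v)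
    (h : ∀ f ∈ w.edges, f ∈ H.edgeSet) {a : G.Dart} {a' : H.Dart}
    (hp : a'.toProd = a.toProd) : a' ∈ (w.transfer H h).darts ↔ a ∈ w.darts := by
  have key : ∀ {W : Type _} {GG : SimpleGraph W} (l : List GG.Dart) (d : GG.Dart),
      d ∈ l ↔ d.toProd ∈ l.map SimpleGraph.Dart.toProd := by
    intro W GG l d
    constructor
    · exact fun hd => List.mem_map_of_mem hd
    · intro hd
      obtain ⟨b, hb, hbd⟩ := List.mem_map.mp hd
      exact (SimpleGraph.Dart.ext _ _ hbd) ▸ hb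
  rw [key, key, SEP_darts_map_transfer, hp]

lemma SEP_reachable_del {V : Type*} {G : SimpleGraph V} {e : Sym2 V} {v w : V}
    (hevw : e = s(v, w)) (h : (G.deleteEdges {e}).Reachable v w) {x y : V}
    (p : G.Walk x y) : (G.deleteEdges {e}).Reachable x y := by
  induction p with
  | nil => exact Reachable.refl _
  | cons ha q ih =>
    rename_i a b c
    refine Reachable.trans ?_ ih
    by_cases hab : s(a, b) = e
    · rw [hevw] at hab
      rw [Sym2.eq_iff] at hab
      rcases hab with ⟨rfl, rfl⟩ | ⟨rfl, rfl⟩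
      · exact h
      · exact h.symm
    · exact SimpleGraph.Adj.reachable
        (by rw [SimpleGraph.deleteEdges_adj]; exact ⟨ha, by simpa using hab⟩)

lemma SEP_conn_card_le {V : Type*} [Fintype V] (G : SimpleGraph V)
    (hG : G.Connected) : Fintype.card V ≤ G.edgeSet.ncard + 1 := by
  classical
  generalize hk : G.edgeSet.ncard = k
  induction k using Nat.strong_induction_on generalizing G with
  | _ k ih =>
    by_cases hac : G.IsAcyclic
    · have ht : G.IsTree := ⟨hG, hac⟩
      haveI : Fintype G.edgeSet := Set.Finite.fintype (Set.toFinite _)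
      have h1 := ht.card_edgeFinset
      have h2 : G.edgeSet.ncard = G.edgeFinset.card := by
        rw [Set.ncard_eq_toFinset_card']
        congr 1
      have h3 : 1 ≤ Fintype.card V := Fintype.card_pos_iff.mpr hG.nonempty
      omega
    · simp only [SimpleGraph.IsAcyclic, not_forall] at hac
      obtain ⟨u, c, hc⟩ := hac
      simp only [not_not] at hc
      have hne : c.edges ≠ [] := by
        intro h
        have h3 := hc.three_le_length
        rw [← SimpleGraph.Walk.length_edges, h] at h3
        simp at h3
      obtain ⟨e, he⟩ := List.exists_mem_of_ne_nil _ hne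
      induction e using Sym2.ind with
      | _ v w =>
      set G' := G.deleteEdges {s(v, w)} with hG'
      have hvw : (G.deleteEdges {s(v,w)}).Reachable v w := by
        have := (SimpleGraph.adj_and_reachable_delete_edges_iff_exists_cycle
          (G := G) (v := v) (w := w)).mpr ⟨u, c, hc, he⟩
        rw [SimpleGraph.deleteEdges]
        exact this.2
      have hG'conn : G'.Connected := by
        haveI := hG.nonempty
        refine ⟨fun x y => ?_⟩
        obtain ⟨p⟩ := hG.preconnected x y
        exact SEP_reachable_del rfl hvw p
      have hmem : s(v,w) ∈ G.edgeSet := c.edges_subset_edgeSet he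
      have hedge : G'.edgeSet = G.edgeSet \ {s(v,w)} := SimpleGraph.edgeSet_deleteEdges _
      have hcard : G'.edgeSet.ncard = k - 1 := by
        rw [hedge, Set.ncard_diff_singleton_of_mem hmem, hk]
      have hk1 : 1 ≤ k := by
        rw [← hk]
        exact (Set.ncard_pos (Set.toFinite _)).mpr ⟨_, hmem⟩
      have := ih (k - 1) (by omega) G' hG'conn hcard
      omega

lemma SEP_induce_walk_reach {V : Type*} {G H : SimpleGraph V} {s : Set V}
    (hAdj : ∀ u v : V, u ∈ s → v ∈ s → G.Adj u v → H.Adj u v) :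
    ∀ {x y : s} (_ : (G.induce s).Walk x y), H.Reachable x.val y.val := by
  intro x y p
  induction p with
  | nil => exact Reachable.refl _
  | cons h q ih =>
    rename_i u v w
    rw [SimpleGraph.comap_adj] at h
    exact (SimpleGraph.Adj.reachable (hAdj u.val v.val u.2 v.2 h)).trans ih

lemma SEP_twoconn_del_conn {V : Type*} [Fintype V] {G : SimpleGraph V} (hG : TwoConnected G)
    {a b : V} (he : G.Adj a b) : (G.deleteEdges {s(a,b)}).Connected := by
  classical
  obtain ⟨hconn, hcard, hind⟩ := hG
  have hab : a ≠ b := G.ne_of_adj he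
  have reach1 : ∀ (z x y : V), x ≠ z → y ≠ z → z ∈ ({a, b} : Set V) →
      (G.deleteEdges {s(a,b)}).Reachable x y := by
    intro z x y hx hy hz
    have hr : (G.induce {u | u ≠ z}).Reachable ⟨x, hx⟩ ⟨y, hy⟩ :=
      (hind z).preconnected _ _
    refine SEP_induce_walk_reach (fun u v hu hv huv => ?_) hr.some
    rw [SimpleGraph.deleteEdges_adj]
    refine ⟨huv, ?_⟩
    simp only [Set.mem_singleton_iff, Sym2.eq_iff]
    rcases hz with rfl | rfl
    · rintro (⟨rfl, rfl⟩ | ⟨rfl, rfl⟩)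
      · exact hu rfl
      · exact hv rfl
    · rintro (⟨rfl, rfl⟩ | ⟨rfl, rfl⟩)
      · exact hv rfl
      · exact hu rfl
  have hthree : 2 < Fintype.card V := by rwa [← Nat.card_eq_fintype_card]
  have nbr : ∀ z w : V, G.Adj z w → s(z,w) = s(a,b) →
      ∃ d : V, d ≠ z ∧ d ≠ w ∧ (G.deleteEdges {s(a,b)}).Adj z d := by
    intro z w hzw hswap
    obtain ⟨c, hc⟩ : ∃ c : V, c ∉ ({z, w} : Finset V) := by
      by_contra hcon
      push_neg at hcon
      have h1 := Finset.card_le_card (fun x (_ : x ∈ Finset.univ) => hcon x)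
      have h2 : ({z, w} : Finset V).card ≤ 2 := (Finset.card_insert_le _ _).trans (by simp)
      simp only [Finset.card_univ] at h1
      omega
    simp only [Finset.mem_insert, Finset.mem_singleton, not_or] at hc
    have hzw' : z ≠ w := G.ne_of_adj hzw
    have hzmem : z ∈ {u | u ≠ w} := hzw'
    have hr : (G.induce {u | u ≠ w}).Reachable ⟨z, hzmem⟩ ⟨c, hc.2⟩ :=
      (hind w).preconnected _ _
    obtain ⟨p⟩ := hr
    have hnn : ¬ p.Nil :=
      SimpleGraph.Walk.not_nil_of_ne (fun hh => hc.1 (congrArg Subtype.val hh).symm)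
    obtain ⟨d, hd, q, -⟩ := SimpleGraph.Walk.not_nil_iff.mp hnn
    rw [SimpleGraph.comap_adj] at hd
    refine ⟨d.val, G.ne_of_adj hd.symm, d.2, ?_⟩
    rw [SimpleGraph.deleteEdges_adj]
    refine ⟨hd, ?_⟩
    rw [← hswap]
    simp only [Set.mem_singleton_iff, Sym2.eq_iff]
    rintro (⟨-, h2⟩ | ⟨h1, -⟩)
    · exact d.2 h2
    · exact hzw' h1
  haveI : Nonempty V := hconn.nonempty
  refine ⟨fun x y => ?_⟩
  have main : ∀ x : V, x = a ∨ x = b → ∃ x' : V, x' ≠ a ∧ x' ≠ b ∧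
      (G.deleteEdges {s(a,b)}).Reachable x x' := by
    rintro x (hx | hx)
    · obtain ⟨d, hd1, hd2, hd3⟩ := nbr a b he rfl
      exact ⟨d, hd1, hd2, by rw [hx]; exact hd3.reachable⟩
    · obtain ⟨d, hd1, hd2, hd3⟩ := nbr b a he.symm (Sym2.eq_swap)
      exact ⟨d, hd2, hd1, by rw [hx]; exact hd3.reachable⟩
  have key : ∀ x : V, ∃ x' : V, x' ≠ a ∧ (G.deleteEdges {s(a,b)}).Reachable x x' := by
    intro x
    by_cases hxa : x = a
    · obtain ⟨x', h1, h2, h3⟩ := main x (Or.inl hxa)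
      exact ⟨x', h1, h3⟩
    · exact ⟨x, hxa, Reachable.refl _⟩
  obtain ⟨x', hx', hrx⟩ := key x
  obtain ⟨y', hy', hry⟩ := key y
  exact hrx.trans ((reach1 a x' y' hx' hy' (by simp)).trans hry.symm)

lemma SEP_card_cc {V : Type*} {G : SimpleGraph V} (h : G.Connected) :
    Nat.card G.ConnectedComponent = 1 := by
  rw [Nat.card_eq_one_iff_unique]
  constructor
  · constructor
    intro c d
    refine SimpleGraph.ConnectedComponent.ind₂ (fun v w => ?_) c d
    exact SimpleGraph.ConnectedComponent.sound (h.preconnected v w)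
  · exact ⟨SimpleGraph.connectedComponentMk _ h.nonempty.some⟩

/-- The inclusion of darts of a subgraph. -/
def dartUp {V : Type*} {G H : SimpleGraph V} (hle : H ≤ G) (d : H.Dart) : G.Dart :=
  ⟨d.toProd, hle d.adj⟩

lemma dartUp_injective {V : Type*} {G H : SimpleGraph V} (hle : H ≤ G) :
    Function.Injective (dartUp hle) := by
  intro d1 d2 h
  exact SimpleGraph.Dart.ext _ _ (congrArg (fun x : G.Dart => x.toProd) h)

lemma dartUp_edge {V : Type*} {G H : SimpleGraph V} (hle : H ≤ G) (d : H.Dart) :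
    (dartUp hle d).edge = d.edge := rfl

lemma SEP_badPair_up {V : Type*} {G H : SimpleGraph V} (hle : H ≤ G)
    (elt : Sym2 V → Sym2 V → Prop) {a b : H.Dart} (h : BadPair H elt a b) :
    BadPair G elt (dartUp hle a) (dartUp hle b) := by
  obtain ⟨hne, hcase⟩ := h
  refine ⟨by rwa [dartUp_edge, dartUp_edge], ?_⟩
  have hmove : ∀ {u : V} (w : H.Walk u u),
      ∃ (w' : G.Walk u u) , w'.edges = w.edges ∧ w'.length = w.length ∧
        (w.IsCycle → w'.IsCycle) ∧
        (∀ d : H.Dart, d ∈ w.darts → dartUp hle d ∈ w'.darts) := by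
    intro u w
    have hsub : ∀ f ∈ w.edges, f ∈ G.edgeSet :=
      fun f hf => SimpleGraph.edgeSet_mono hle (w.edges_subset_edgeSet hf)
    refine ⟨w.transfer G hsub, w.edges_transfer hsub, w.length_transfer hsub,
      fun hc => hc.transfer hsub, fun d hd => ?_⟩
    exact (SEP_mem_darts_transfer w hsub (a := d) (a' := dartUp hle d) rfl).mpr hd
  rcases hcase with ⟨u, w, hc, hlen, ha, hb⟩ | ⟨u, w, hc, hlen, ha, hb, hea, heb⟩
  · obtain ⟨w', he', hl', hcyc', hd'⟩ := hmove w
    exact Or.inl ⟨u, w', hcyc' hc, hl' ▸ hlen, hd' a ha, hd' b hb⟩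
  · obtain ⟨w', he', hl', hcyc', hd'⟩ := hmove w
    refine Or.inr ⟨u, w', hcyc' hc, hl' ▸ hlen, hd' a ha, hd' b hb, ?_, ?_⟩
    · obtain ⟨f, hf, hff⟩ := hea
      exact ⟨f, he' ▸ hf, hff⟩
    · obtain ⟨f, hf, hff⟩ := heb
      exact ⟨f, he' ▸ hf, hff⟩

lemma SEP_dart_edge_mem_edges {V : Type*} {G : SimpleGraph V} {u v : V} {w : G.Walk u v}
    {d : G.Dart} (hd : d ∈ w.darts) : d.edge ∈ w.edges :=
  List.mem_map_of_mem hd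

lemma SEP_badPair_down {V : Type*} {G : SimpleGraph V} {e : Sym2 V}
    (hcyc : ¬ ∃ (u : V) (w : G.Walk u u),
      w.IsCycle ∧ (w.length = 3 ∨ w.length = 4) ∧ e ∈ w.edges)
    (elt : Sym2 V → Sym2 V → Prop) {a b : G.Dart} (h : BadPair G elt a b) :
    ∃ a' b' : (G.deleteEdges {e}).Dart,
      dartUp (SimpleGraph.deleteEdges_le {e}) a' = a ∧
      dartUp (SimpleGraph.deleteEdges_le {e}) b' = b ∧
      BadPair (G.deleteEdges {e}) elt a' b' := by
  classical
  set G' := G.deleteEdges {e} with hG'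
  have hle : G' ≤ G := SimpleGraph.deleteEdges_le _
  obtain ⟨hne, hcase⟩ := h
  have main : ∀ (u : V) (w : G.Walk u u), w.IsCycle → (w.length = 3 ∨ w.length = 4) →
      ∃ hsub : (∀ f ∈ w.edges, f ∈ G'.edgeSet), ∀ d : G.Dart, d ∈ w.darts →
        ∃ d' : G'.Dart, dartUp hle d' = d ∧ d' ∈ (w.transfer G' hsub).darts := by
    intro u w hc hlen
    have hnotin : e ∉ w.edges := fun hmem => hcyc ⟨u, w, hc, hlen, hmem⟩
    have hsub : ∀ f ∈ w.edges, f ∈ G'.edgeSet := by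
      intro f hf
      rw [hG', SimpleGraph.edgeSet_deleteEdges]
      exact ⟨w.edges_subset_edgeSet hf, fun hfe => hnotin (by
        rw [Set.mem_singleton_iff] at hfe
        rwa [hfe] at hf)⟩
    refine ⟨hsub, fun d hd => ?_⟩
    have hde : d.edge ≠ e := by
      intro hdeq
      exact hnotin (hdeq ▸ SEP_dart_edge_mem_edges hd)
    have hadj : G'.Adj d.toProd.1 d.toProd.2 := by
      rw [hG', SimpleGraph.deleteEdges_adj]
      exact ⟨d.adj, fun h => hde (Set.mem_singleton_iff.mp h)⟩
    refine ⟨⟨d.toProd, hadj⟩, SimpleGraph.Dart.ext _ _ rfl, ?_⟩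
    exact (SEP_mem_darts_transfer w hsub (a := d) (a' := ⟨d.toProd, hadj⟩) rfl).mpr hd
  rcases hcase with ⟨u, w, hc, hlen, ha, hb⟩ | ⟨u, w, hc, hlen, ha, hb, hea, heb⟩
  · obtain ⟨hsub, lift⟩ := main u w hc (Or.inl hlen)
    obtain ⟨a', ha1, ha2⟩ := lift a ha
    obtain ⟨b', hb1, hb2⟩ := lift b hb
    refine ⟨a', b', ha1, hb1, ?_, Or.inl ⟨u, w.transfer G' hsub, hc.transfer hsub,
      (w.length_transfer hsub).trans hlen, ha2, hb2⟩⟩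
    rw [← ha1, ← hb1] at hne
    exact hne
  · obtain ⟨hsub, lift⟩ := main u w hc (Or.inr hlen)
    obtain ⟨a', ha1, ha2⟩ := lift a ha
    obtain ⟨b', hb1, hb2⟩ := lift b hb
    refine ⟨a', b', ha1, hb1, ?_, Or.inr ⟨u, w.transfer G' hsub, hc.transfer hsub,
      (w.length_transfer hsub).trans hlen, ha2, hb2, ?_, ?_⟩⟩
    · rw [← ha1, ← hb1] at hne
      exact hne
    · obtain ⟨f, hf, hff⟩ := hea
      refine ⟨f, (w.edges_transfer hsub).symm ▸ hf, ?_⟩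
      rw [← ha1] at hff
      exact hff
    · obtain ⟨f, hf, hff⟩ := heb
      refine ⟨f, (w.edges_transfer hsub).symm ▸ hf, ?_⟩
      rw [← hb1] at hff
      exact hff

end Aux

open Filter in
theorem stmt3 {n : ℕ} (G : SimpleGraph (Fin n)) (hG : TwoConnected G)
    (e : Sym2 (Fin n)) (he : e ∈ G.edgeSet)
    (hcyc : ¬ ∃ (u : Fin n) (w : G.Walk u u),
      w.IsCycle ∧ (w.length = 3 ∨ w.length = 4) ∧ e ∈ w.edges)
    (elt : Sym2 (Fin n) → Sym2 (Fin n) → Prop)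
    (hord : IsStrictTotalOrder (Sym2 (Fin n)) elt) :
    gammaTwo G elt = gammaTwo (G.deleteEdges {e}) elt + 4 * cyc G + 2 ∧
      gammaTwo (G.deleteEdges {e}) elt < gammaTwo G elt := by
  classical
  have hle : G.deleteEdges {e} ≤ G := SimpleGraph.deleteEdges_le _
  -- the two graphs have the same number of bad pairs
  have hn1 : n1 G elt = n1 (G.deleteEdges {e}) elt := by
    have hSeq : {z : Sym2 G.Dart | ∃ a b, BadPair G elt a b ∧ z = s(a, b)}
        = Sym2.map (dartUp hle) ''
          {z : Sym2 (G.deleteEdges {e}).Dart |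
            ∃ a b, BadPair (G.deleteEdges {e}) elt a b ∧ z = s(a, b)} := by
      ext z
      constructor
      · rintro ⟨a, b, hab, rfl⟩
        obtain ⟨a', b', ha', hb', hbad⟩ := SEP_badPair_down hcyc elt hab
        refine ⟨s(a', b'), ⟨a', b', hbad, rfl⟩, ?_⟩
        rw [Sym2.map_pair_eq, ha', hb']
      · rintro ⟨z', ⟨a, b, hab, rfl⟩, rfl⟩
        exact ⟨dartUp hle a, dartUp hle b, SEP_badPair_up hle elt hab,
          (Sym2.map_pair_eq _ _ _).symm⟩
    unfold n1
    rw [hSeq, Set.ncard_image_of_injective _ (Sym2.map.injective (dartUp_injective hle))]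
  -- connectivity of the edge-deleted graph
  induction e using Sym2.ind with
  | _ a b =>
  have hadj : G.Adj a b := he
  have hG'conn : (G.deleteEdges {s(a, b)}).Connected := SEP_twoconn_del_conn hG hadj
  have hEfin : G.edgeSet.Finite := Set.toFinite _
  have hE1 : 1 ≤ G.edgeSet.ncard := (Set.ncard_pos hEfin).mpr ⟨_, he⟩
  have hEdel : (G.deleteEdges {s(a, b)}).edgeSet.ncard = G.edgeSet.ncard - 1 := by
    rw [SimpleGraph.edgeSet_deleteEdges, Set.ncard_diff_singleton_of_mem he]
  have hccG : Nat.card G.ConnectedComponent = 1 := SEP_card_cc hG.1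
  have hccG' : Nat.card (G.deleteEdges {s(a, b)}).ConnectedComponent = 1 :=
    SEP_card_cc hG'conn
  have hcycdel : cyc (G.deleteEdges {s(a, b)}) = cyc G - 1 := by
    unfold cyc
    rw [hEdel, hccG, hccG', Nat.cast_sub hE1]
    ring
  have hcyc0 : (0 : ℤ) ≤ cyc G := by
    have h1 := SEP_conn_card_le G hG.1
    unfold cyc
    rw [hccG]
    have h2 : Nat.card (Fin n) = n := by simp
    have h3 : Fintype.card (Fin n) = n := by simp
    rw [h2]
    rw [h3] at h1
    omega
  have heq : gammaTwo G elt = gammaTwo (G.deleteEdges {s(a, b)}) elt + 4 * cyc G + 2 := by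
    unfold gammaTwo
    rw [hn1, hcycdel]
    ring
  exact ⟨heq, by rw [heq]; linarith⟩
end SEP
end

section
/- Let G be a 2-connected graph in which every vertex has degree at least 3, and let H be a 2-connected subgraph of G having exactly k vertices whose degree in H equals 2. Then 2·cy(G) ≥ 2·cy(H) + k. -/
open SimpleGraph Finset Filter

namespace SEP

lemma deg_ncard {W : Type*} (G' : SimpleGraph W) (v : W)
    (inst : Fintype (G'.neighborSet v)) :
    @SimpleGraph.degree _ G' v inst = (G'.neighborSet v).ncard := by
  rw [← card_neighborSet_eq_degree, ← Nat.card_eq_fintype_card, Nat.card_coe_set_eq]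

lemma card_cc_eq_one {V : Type*} (G : SimpleGraph V) (h : G.Connected) :
    Nat.card G.ConnectedComponent = 1 := by
  haveI := h.preconnected.subsingleton_connectedComponent
  haveI : Nonempty G.ConnectedComponent := ⟨G.connectedComponentMk h.nonempty.some⟩
  exact Nat.card_eq_one_iff_unique.mpr ⟨inferInstance, inferInstance⟩


open Filter in
theorem stmt5 {V : Type*} [Fintype V] (G : SimpleGraph V) (hG : TwoConnected G)
    (hdeg : ∀ v : V, 3 ≤ (G.neighborSet v).ncard)
    (H : G.Subgraph) (hH : TwoConnected H.coe) (k : ℕ)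
    (hk : k = Set.ncard {v ∈ H.verts | (H.neighborSet v).ncard = 2}) :
    2 * cyc H.coe + (k : ℤ) ≤ 2 * cyc G := by
  classical
  set dG : V → ℕ := fun v => (G.neighborSet v).ncard with hdGdef
  set dH : V → ℕ := fun v => (H.neighborSet v).ncard with hdHdef
  -- handshake G
  have hG1 : ∑ v : V, dG v = 2 * G.edgeSet.ncard := by
    have h2 : G.edgeSet.ncard = G.edgeFinset.card := by
      rw [Set.ncard_eq_toFinset_card']
      congr 1
    have h3 := G.sum_degrees_eq_twice_card_edges
    simp only [deg_ncard] at h3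
    rw [h2, ← h3]
  have hdH0 : ∀ v : V, v ∉ H.verts → dH v = 0 := by
    intro v hv
    show (H.neighborSet v).ncard = 0
    rw [Set.ncard_eq_zero (Set.toFinite _)]
    ext u
    simp only [Subgraph.mem_neighborSet, Set.mem_empty_iff_false, iff_false]
    exact fun h => hv (H.edge_vert h)
  -- handshake H
  have hH1 : ∑ v : V, dH v = 2 * H.coe.edgeSet.ncard := by
    have h2 : H.coe.edgeSet.ncard = H.coe.edgeFinset.card := by
      rw [Set.ncard_eq_toFinset_card']
      congr 1
    have h3 := H.coe.sum_degrees_eq_twice_card_edges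
    simp only [deg_ncard] at h3
    have h4 : ∀ v : ↥H.verts, (H.coe.neighborSet v).ncard = dH ↑v := by
      intro v
      show _ = (H.neighborSet ↑v).ncard
      rw [← Nat.card_coe_set_eq, ← Nat.card_coe_set_eq]
      exact Nat.card_congr (Subgraph.coeNeighborSetEquiv v)
    have h5 : ∑ v : V, dH v = ∑ v ∈ H.verts.toFinset, dH v := by
      refine (Finset.sum_subset (Finset.subset_univ _) ?_).symm
      intro v _ hv
      rw [Set.mem_toFinset] at hv
      exact hdH0 v hv
    have h6 : ∑ v ∈ H.verts.toFinset, dH v = ∑ v : ↥H.verts, dH ↑v :=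
      Finset.sum_subtype _ (by simp) _
    rw [h5, h6, ← Finset.sum_congr rfl (fun v _ => (h4 v)), h3, h2]
  -- the weight function
  set w : V → ℕ := fun v =>
    (if v ∈ H.verts ∧ dH v = 2 then 1 else 0) + (if v ∉ H.verts then 3 else 0) with hwdef
  have hpw : ∀ v : V, dH v + w v ≤ dG v := by
    intro v
    have h3 : 3 ≤ dG v := hdeg v
    have hle : dH v ≤ dG v :=
      Set.ncard_le_ncard (H.neighborSet_subset v) (Set.toFinite _)
    by_cases hv : v ∈ H.verts
    · by_cases h2 : dH v = 2
      · have hw1 : w v = 1 := by simp [hwdef, hv, h2]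
        omega
      · have hw0 : w v = 0 := by simp [hwdef, hv, h2]
        omega
    · have hw3 : w v = 3 := by simp [hwdef, hv]
      have h0 := hdH0 v hv
      omega
  have hsum : ∑ v, dH v + ∑ v, w v ≤ ∑ v, dG v := by
    rw [← Finset.sum_add_distrib]
    exact Finset.sum_le_sum (fun v _ => hpw v)
  -- compute the weight sum
  have hw : ∑ v, w v =
      (Finset.univ.filter (fun v => v ∈ H.verts ∧ dH v = 2)).card +
        3 * (Finset.univ.filter (fun v => v ∉ H.verts)).card := by
    rw [hwdef, Finset.sum_add_distrib]
    congr 1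
    · rw [Finset.card_filter]
    · rw [Finset.card_filter, Finset.mul_sum]
      congr 1; ext v
      by_cases hv : v ∉ H.verts <;> simp [hv]
  -- k as a filter card
  have hkcard : k = (Finset.univ.filter (fun v => v ∈ H.verts ∧ dH v = 2)).card := by
    rw [hk, Set.ncard_eq_toFinset_card']
    congr 1
    ext v
    simp [hdHdef]
  -- vertex counts
  have hnH : H.verts.ncard = (Finset.univ.filter (fun v => v ∈ H.verts)).card := by
    rw [Set.ncard_eq_toFinset_card']
    congr 1
    ext v
    simp
  have hsplit : (Finset.univ.filter (fun v => v ∈ H.verts)).card +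
      (Finset.univ.filter (fun v => v ∉ H.verts)).card = Fintype.card V := by
    rw [← Finset.card_univ]
    exact Finset.card_filter_add_card_filter_not _
  -- cyclomatic numbers
  have hcG : cyc G = (G.edgeSet.ncard : ℤ) + 1 - (Fintype.card V : ℤ) := by
    unfold cyc
    rw [card_cc_eq_one _ hG.1, Nat.card_eq_fintype_card]
    push_cast
    ring
  have hcH : cyc H.coe = (H.coe.edgeSet.ncard : ℤ) + 1 - (H.verts.ncard : ℤ) := by
    unfold cyc
    rw [card_cc_eq_one _ hH.1, Nat.card_coe_set_eq]
    push_cast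
    ring
  rw [hcG, hcH]
  omega


end SEP
end

section
/- Let p: ℕ → [0,1] satisfy lim_{n→∞} n·p(n) = 0. Then the probability that the Erdős–Rényi random graph G ∈ G(n,p(n)) contains at least one cycle tends to 0 as n → ∞; equivalently, asymptotically almost surely G is a forest. -/
open SimpleGraph Finset Filter

namespace SEP

/-! ### Auxiliary lemmas for Statement 11 -/

lemma graphWeight_nonneg {n : ℕ} {p : ℝ} (hp : p ∈ Set.Icc (0 : ℝ) 1)
    (G : SimpleGraph (Fin n)) : 0 ≤ graphWeight n p G :=
  mul_nonneg (pow_nonneg hp.1 _) (pow_nonneg (by linarith [hp.2]) _)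

lemma erProb_nonneg {n : ℕ} {p : ℝ} (hp : p ∈ Set.Icc (0 : ℝ) 1)
    (A : Set (SimpleGraph (Fin n))) : 0 ≤ erProb n p A :=
  Finset.sum_nonneg fun G _ =>
    Set.indicator_nonneg (fun _ _ => graphWeight_nonneg hp _) _

lemma erProb_mono {n : ℕ} {p : ℝ} (hp : p ∈ Set.Icc (0 : ℝ) 1)
    {A B : Set (SimpleGraph (Fin n))} (hAB : A ⊆ B) :
    erProb n p A ≤ erProb n p B :=
  Finset.sum_le_sum fun G _ =>
    Set.indicator_le_indicator_of_subset hAB (fun _ => graphWeight_nonneg hp _) G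

set_option maxHeartbeats 1000000 in
/-- The union bound. -/
lemma erProb_le_sum {n : ℕ} {p : ℝ} (hp : p ∈ Set.Icc (0 : ℝ) 1)
    {ι : Type*} (s : Finset ι) (A : Set (SimpleGraph (Fin n)))
    (B : ι → Set (SimpleGraph (Fin n)))
    (hcov : ∀ G ∈ A, ∃ i ∈ s, G ∈ B i) :
    erProb n p A ≤ ∑ i ∈ s, erProb n p (B i) := by
  unfold erProb
  rw [Finset.sum_comm]
  refine Finset.sum_le_sum fun G _ => ?_
  by_cases hG : G ∈ A
  · obtain ⟨i, hi, hBi⟩ := hcov G hG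
    rw [Set.indicator_of_mem hG]
    calc graphWeight n p G = (B i).indicator (graphWeight n p) G :=
          (Set.indicator_of_mem hBi _).symm
      _ ≤ ∑ j ∈ s, (B j).indicator (graphWeight n p) G :=
          Finset.single_le_sum
            (fun j _ => Set.indicator_nonneg (fun _ _ => graphWeight_nonneg hp _) _) hi
  · rw [Set.indicator_of_notMem hG]
    exact Finset.sum_nonneg fun j _ =>
      Set.indicator_nonneg (fun _ _ => graphWeight_nonneg hp _) _

/-- The probability that a fixed set of (non-diagonal) edges is present is `p ^ |F|`. -/
lemma erProb_edges_subset {n : ℕ} {p : ℝ} (hp : p ∈ Set.Icc (0 : ℝ) 1)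
    (F : Finset (Sym2 (Fin n))) (hF : ∀ e ∈ F, ¬ e.IsDiag) :
    erProb n p {G | ↑F ⊆ G.edgeSet} = p ^ F.card := by
  classical
  have hq : (0:ℝ) ≤ 1 - p := by linarith [hp.2]
  set K : Finset (Sym2 (Fin n)) := (⊤ : SimpleGraph (Fin n)).edgeFinset with hK
  have hKmem : ∀ e : Sym2 (Fin n), e ∈ K ↔ ¬ e.IsDiag := by
    intro e
    rw [hK, SimpleGraph.mem_edgeFinset, SimpleGraph.edgeSet_top]
    rfl
  have hFK : F ⊆ K := fun e he => (hKmem e).mpr (hF e he)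
  have hKcard : K.card = n.choose 2 := by
    rw [hK, SimpleGraph.card_edgeFinset_top_eq_card_choose_two, Fintype.card_fin]
  set M : Finset (Sym2 (Fin n)) := K \ F with hM
  have hMcard : F.card + M.card = n.choose 2 := by
    rw [hM, Finset.card_sdiff_of_subset hFK, hKcard]
    have := Finset.card_le_card hFK
    omega
  unfold erProb
  rw [Finset.sum_indicator_eq_sum_filter]
  have key : ∑ G ∈ Finset.univ.filter (fun i => i ∈ {G : SimpleGraph (Fin n) | ↑F ⊆ G.edgeSet}),
      graphWeight n p G
      = ∑ T ∈ M.powerset, p ^ (F.card + T.card) * (1 - p) ^ (n.choose 2 - (F.card + T.card)) := by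
    refine Finset.sum_nbij' (fun G => G.edgeFinset \ F)
      (fun T => SimpleGraph.fromEdgeSet ↑(F ∪ T)) ?_ ?_ ?_ ?_ ?_
    · intro G hG
      simp only [Finset.mem_filter, Finset.mem_univ, true_and, id_eq, Set.mem_setOf_eq] at hG
      rw [Finset.mem_powerset, hM]
      exact Finset.sdiff_subset_sdiff (SimpleGraph.edgeFinset_subset_edgeFinset.mpr le_top)
        (le_refl F)
    · intro T hT
      simp only [Finset.mem_filter, Finset.mem_univ, true_and, id_eq, Set.mem_setOf_eq]
      intro e he
      rw [SimpleGraph.edgeSet_fromEdgeSet]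
      exact ⟨by simp [he], hF e he⟩
    · intro G hG
      simp only [Finset.mem_filter, Finset.mem_univ, true_and, id_eq, Set.mem_setOf_eq] at hG
      have hFG : F ⊆ G.edgeFinset := fun e he => SimpleGraph.mem_edgeFinset.mpr (hG he)
      show SimpleGraph.fromEdgeSet ↑(F ∪ (G.edgeFinset \ F)) = G
      rw [Finset.union_sdiff_of_subset hFG, SimpleGraph.coe_edgeFinset,
        SimpleGraph.fromEdgeSet_edgeSet]
    · intro T hT
      rw [Finset.mem_powerset] at hT
      have hdisj : Disjoint F T := by
        refine Finset.disjoint_left.mpr fun e heF heT => ?_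
        have := hT heT
        rw [hM, Finset.mem_sdiff] at this
        exact this.2 heF
      have hnd : ∀ e ∈ F ∪ T, ¬ e.IsDiag := by
        intro e he
        rcases Finset.mem_union.mp he with h1 | h1
        · exact hF e h1
        · exact (hKmem e).mp ((Finset.sdiff_subset) (hT h1))
      apply Finset.coe_injective
      rw [Finset.coe_sdiff, SimpleGraph.coe_edgeFinset, SimpleGraph.edgeSet_fromEdgeSet]
      ext e
      simp only [Set.mem_diff, Finset.coe_union, Set.mem_union, Finset.mem_coe,
        Set.mem_setOf_eq]
      constructor
      · rintro ⟨⟨h1 | h1, -⟩, h2⟩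
        · exact absurd h1 h2
        · exact h1
      · intro he
        exact ⟨⟨Or.inr he, hnd e (Finset.mem_union_right F he)⟩,
          fun hF' => Finset.disjoint_left.mp hdisj hF' he⟩
    · intro G hG
      simp only [Finset.mem_filter, Finset.mem_univ, true_and, id_eq, Set.mem_setOf_eq] at hG
      have hFG : F ⊆ G.edgeFinset := fun e he => SimpleGraph.mem_edgeFinset.mpr (hG he)
      have hcard : G.edgeSet.ncard = F.card + (G.edgeFinset \ F).card := by
        rw [Set.ncard_eq_toFinset_card']
        have : (G.edgeFinset \ F).card = G.edgeFinset.card - F.card :=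
          Finset.card_sdiff_of_subset hFG
        have h2 := Finset.card_le_card hFG
        have h3 : G.edgeSet.toFinset = G.edgeFinset := rfl
        rw [h3]
        omega
      show graphWeight n p G
          = p ^ (F.card + (G.edgeFinset \ F).card)
            * (1 - p) ^ (n.choose 2 - (F.card + (G.edgeFinset \ F).card))
      unfold graphWeight
      rw [hcard]
  rw [key]
  have step : ∀ T ∈ M.powerset,
      p ^ (F.card + T.card) * (1 - p) ^ (n.choose 2 - (F.card + T.card))
      = p ^ F.card * (p ^ T.card * (1 - p) ^ (M.card - T.card)) := by
    intro T hT
    rw [Finset.mem_powerset] at hT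
    have h1 : T.card ≤ M.card := Finset.card_le_card hT
    have h2 : n.choose 2 - (F.card + T.card) = M.card - T.card := by omega
    rw [h2, pow_add, mul_assoc]
  rw [Finset.sum_congr rfl step, ← Finset.mul_sum]
  have hone : ∑ T ∈ M.powerset, p ^ T.card * (1 - p) ^ (M.card - T.card) = 1 := by
    have h2 := Finset.prod_add (fun _ : Sym2 (Fin n) => p) (fun _ => 1 - p) M
    simp only [Finset.prod_const] at h2
    have h3 : ∀ T ∈ M.powerset,
        p ^ T.card * (1 - p) ^ ((M \ T).card) = p ^ T.card * (1 - p) ^ (M.card - T.card) := by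
      intro T hT
      rw [Finset.card_sdiff_of_subset (Finset.mem_powerset.mp hT)]
    rw [← Finset.sum_congr rfl h3, ← h2]
    norm_num
  rw [hone, mul_one]

lemma getVert_eq_support_getElem' {V : Type*} {G : SimpleGraph V} {u v : V} (w : G.Walk u v)
    {i : ℕ} (hi : i < w.support.length) : w.getVert i = w.support[i] := by
  induction w generalizing i with
  | nil =>
    simp only [SimpleGraph.Walk.support_nil, List.length_singleton] at hi
    interval_cases i
    simp [SimpleGraph.Walk.getVert]
  | cons h q ih =>
    cases i with
    | zero => simp [SimpleGraph.Walk.getVert_zero]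
    | succ i =>
      have hi' : i < q.support.length := by
        simpa [SimpleGraph.Walk.support_cons] using hi
      simp only [SimpleGraph.Walk.getVert_cons_succ, SimpleGraph.Walk.support_cons,
        List.getElem_cons_succ]
      exact ih hi'

lemma IsCycle.getVert_inj {V : Type*} [Fintype V] {G : SimpleGraph V} {u : V} {w : G.Walk u u}
    (hw : w.IsCycle) {i j : ℕ} (hi : i < w.length) (hj : j < w.length)
    (h : w.getVert i = w.getVert j) : i = j := by
  have hnd : w.support.tail.Nodup := hw.support_nodup
  have hlen : w.support.tail.length = w.length := by
    rw [List.length_tail, w.length_support]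
    omega
  have hgv : ∀ m : ℕ, 1 ≤ m → m ≤ w.length → ∀ hb : m - 1 < w.support.tail.length,
      w.getVert m = w.support.tail[m-1]'hb := by
    intro m h1 h2 hb
    have hm : m < w.support.length := by rw [w.length_support]; omega
    rw [getVert_eq_support_getElem' w hm, List.getElem_tail]
    congr 1
    omega
  have h3 := hw.three_le_length
  -- shift indices: 0 ↦ length
  set i' := if i = 0 then w.length else i with hi'
  set j' := if j = 0 then w.length else j with hj'
  have hiv : w.getVert i' = w.getVert i := by
    rw [hi']; split
    · rename_i h0; rw [h0, SimpleGraph.Walk.getVert_zero, SimpleGraph.Walk.getVert_length]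
    · rfl
  have hjv : w.getVert j' = w.getVert j := by
    rw [hj']; split
    · rename_i h0; rw [h0, SimpleGraph.Walk.getVert_zero, SimpleGraph.Walk.getVert_length]
    · rfl
  have hi1 : 1 ≤ i' ∧ i' ≤ w.length := by rw [hi']; split <;> omega
  have hj1 : 1 ≤ j' ∧ j' ≤ w.length := by rw [hj']; split <;> omega
  have heq : w.support.tail[i'-1]'(by omega) = w.support.tail[j'-1]'(by omega) := by
    rw [← hgv i' hi1.1 hi1.2 (by omega), ← hgv j' hj1.1 hj1.2 (by omega), hiv, hjv, h]
  have := (List.Nodup.getElem_inj_iff hnd).mp heq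
  rw [hi', hj'] at this
  split at this <;> split at this <;> omega

/-- First-moment bound on cycles of length `k`. -/
lemma erProb_cycle_le {n k : ℕ} {p : ℝ} (hp : p ∈ Set.Icc (0 : ℝ) 1) (hk : 3 ≤ k) :
    erProb n p {G : SimpleGraph (Fin n) | ∃ u, ∃ w : G.Walk u u, w.IsCycle ∧ w.length = k}
      ≤ (n : ℝ) ^ k * p ^ k := by
  classical
  haveI : NeZero k := ⟨by omega⟩
  haveI : Fact (1 < k) := ⟨by omega⟩
  set B : (ZMod k → Fin n) → Set (SimpleGraph (Fin n)) :=
    fun f => {G | ∀ i : ZMod k, G.Adj (f i) (f (i + 1))} with hBdef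
  have hsucc : ∀ (i : ZMod k), (i + 1).val = (i.val + 1) % k := by
    intro i
    rw [ZMod.val_add, ZMod.val_one]
  have cover : ∀ G ∈ {G : SimpleGraph (Fin n) | ∃ u, ∃ w : G.Walk u u, w.IsCycle ∧ w.length = k},
      ∃ f ∈ Finset.univ.filter (fun f : ZMod k → Fin n => Function.Injective f), G ∈ B f := by
    rintro G ⟨u, w, hw, hwl⟩
    refine ⟨fun i => w.getVert i.val, Finset.mem_filter.mpr ⟨Finset.mem_univ _, ?_⟩, ?_⟩
    · intro a b hab
      have ha : a.val < w.length := by rw [hwl]; exact ZMod.val_lt a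
      have hb : b.val < w.length := by rw [hwl]; exact ZMod.val_lt b
      exact ZMod.val_injective k (IsCycle.getVert_inj hw ha hb hab)
    · intro i
      have hiv : i.val < k := ZMod.val_lt i
      have hadj : G.Adj (w.getVert i.val) (w.getVert (i.val + 1)) :=
        w.adj_getVert_succ (by omega)
      have : w.getVert ((i + 1 : ZMod k).val) = w.getVert (i.val + 1) := by
        rw [hsucc i]
        rcases Nat.lt_or_ge (i.val + 1) k with hlt | hge
        · rw [Nat.mod_eq_of_lt hlt]
        · have hik : i.val + 1 = k := by omega
          rw [hik, Nat.mod_self, SimpleGraph.Walk.getVert_zero, ← hwl,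
            SimpleGraph.Walk.getVert_length]
      simp only [hBdef, Set.mem_setOf_eq] at *
      rw [this]
      exact hadj
  have hBle : ∀ f : ZMod k → Fin n, Function.Injective f → erProb n p (B f) ≤ p ^ k := by
    intro f hf
    set F : Finset (Sym2 (Fin n)) :=
      Finset.image (fun i : ZMod k => s(f i, f (i + 1))) Finset.univ with hFdef
    have hne : ∀ i : ZMod k, f i ≠ f (i + 1) := by
      intro i hfi
      have := hf hfi
      have h2 : (1 : ZMod k) ≠ 0 := one_ne_zero
      have : (1 : ZMod k) = 0 := by
        have := left_eq_add.mp this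
        exact this
      exact h2 this
    have hFnd : ∀ e ∈ F, ¬ e.IsDiag := by
      intro e he
      rw [hFdef, Finset.mem_image] at he
      obtain ⟨i, -, rfl⟩ := he
      rw [Sym2.mk_isDiag_iff]
      exact hne i
    have hinj : Function.Injective (fun i : ZMod k => s(f i, f (i + 1))) := by
      intro a b hab
      simp only [Sym2.eq_iff] at hab
      rcases hab with ⟨h1, -⟩ | ⟨h1, h2⟩
      · exact hf h1
      · -- f a = f (b+1), f (a+1) = f b : leads to 2 = 0 in ZMod k
        have ha : a = b + 1 := hf h1
        have hb : a + 1 = b := hf h2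
        have hbb : b + 2 = b := by
          calc b + 2 = (b + 1) + 1 := by ring
            _ = a + 1 := by rw [ha]
            _ = b := hb
        have h20 : (2 : ZMod k) = 0 := add_eq_left.mp hbb
        have : ((2 : ℕ) : ZMod k) = 0 := by exact_mod_cast h20
        have := (ZMod.natCast_eq_zero_iff 2 k).mp this
        have := Nat.le_of_dvd (by norm_num) this
        omega
    have hFcard : F.card = k := by
      rw [hFdef, Finset.card_image_of_injective _ hinj, Finset.card_univ, ZMod.card]
    have hsub : B f ⊆ {G : SimpleGraph (Fin n) | ↑F ⊆ G.edgeSet} := by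
      intro G hG e he
      simp only [hFdef, Finset.coe_image, Finset.coe_univ, Set.image_univ,
        Set.mem_range] at he
      obtain ⟨i, rfl⟩ := he
      exact (G.mem_edgeSet).mpr (hG i)
    calc erProb n p (B f) ≤ erProb n p {G : SimpleGraph (Fin n) | ↑F ⊆ G.edgeSet} :=
          erProb_mono hp hsub
      _ = p ^ F.card := erProb_edges_subset hp F hFnd
      _ = p ^ k := by rw [hFcard]
  calc erProb n p {G : SimpleGraph (Fin n) | ∃ u, ∃ w : G.Walk u u, w.IsCycle ∧ w.length = k}
      ≤ ∑ f ∈ Finset.univ.filter (fun f : ZMod k → Fin n => Function.Injective f),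
          erProb n p (B f) := erProb_le_sum hp _ _ _ cover
    _ ≤ ∑ f ∈ Finset.univ.filter (fun f : ZMod k → Fin n => Function.Injective f),
          p ^ k := by
        refine Finset.sum_le_sum fun f hf => ?_
        exact hBle f (Finset.mem_filter.mp hf).2
    _ = ((Finset.univ.filter (fun f : ZMod k → Fin n => Function.Injective f)).card : ℝ)
          * p ^ k := by rw [Finset.sum_const, nsmul_eq_mul]
    _ ≤ (n : ℝ) ^ k * p ^ k := by
        refine mul_le_mul_of_nonneg_right ?_ (pow_nonneg hp.1 k)
        have h1 : (Finset.univ.filter (fun f : ZMod k → Fin n => Function.Injective f)).card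
            ≤ Fintype.card (ZMod k → Fin n) := by
          rw [← Finset.card_univ]
          exact Finset.card_le_card (Finset.filter_subset _ _)
        have h2 : Fintype.card (ZMod k → Fin n) = n ^ k := by
          rw [Fintype.card_fun, ZMod.card, Fintype.card_fin]
        calc ((Finset.univ.filter (fun f : ZMod k → Fin n => Function.Injective f)).card : ℝ)
            ≤ (n ^ k : ℕ) := by exact_mod_cast h2 ▸ h1
          _ = (n : ℝ) ^ k := by push_cast; ring

lemma geom_tail_bound {x : ℝ} (hx0 : 0 ≤ x) (hx : x ≤ 1 / 2) (n : ℕ) :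
    ∑ k ∈ Finset.Icc 3 n, x ^ k ≤ 2 * x ^ 3 := by
  rw [← Finset.Ico_add_one_right_eq_Icc, Finset.sum_Ico_eq_sum_range]
  have hcong : ∀ i ∈ Finset.range (n + 1 - 3), x ^ (3 + i) = x ^ 3 * x ^ i :=
    fun i _ => pow_add x 3 i
  rw [Finset.sum_congr rfl hcong, ← Finset.mul_sum]
  have hsum : ∑ i ∈ Finset.range (n + 1 - 3), x ^ i ≤ 2 := by
    set m := n + 1 - 3
    calc ∑ i ∈ Finset.range m, x ^ i ≤ ∑ i ∈ Finset.range m, (1 / 2 : ℝ) ^ i :=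
          Finset.sum_le_sum fun i _ => pow_le_pow_left₀ hx0 hx i
      _ = ((1 / 2 : ℝ) ^ m - 1) / ((1 / 2 : ℝ) - 1) := geom_sum_eq (by norm_num) m
      _ ≤ 2 := by
          have h1 : (0 : ℝ) ≤ (1 / 2 : ℝ) ^ m := by positivity
          have h2 : (1 / 2 : ℝ) ^ m ≤ 1 := pow_le_one₀ (by norm_num) (by norm_num)
          rw [div_le_iff_of_neg (by norm_num : ((1:ℝ)/2 - 1) < 0)]
          linarith
  calc x ^ 3 * ∑ i ∈ Finset.range (n + 1 - 3), x ^ i ≤ x ^ 3 * 2 :=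
        mul_le_mul_of_nonneg_left hsum (pow_nonneg hx0 3)
    _ = 2 * x ^ 3 := mul_comm _ _

open Filter in
theorem stmt11 (p : ℕ → ℝ) (hp : ∀ n, p n ∈ Set.Icc (0 : ℝ) 1)
    (h : Tendsto (fun n : ℕ => (n : ℝ) * p n) atTop (nhds 0)) :
    Tendsto (fun n => erProb n (p n) {G | ¬ G.IsAcyclic}) atTop (nhds 0) := by
  have hnn : ∀ n : ℕ, 0 ≤ erProb n (p n) {G | ¬ G.IsAcyclic} :=
    fun n => erProb_nonneg (hp n) _
  have hhalf : ∀ᶠ n : ℕ in atTop, (n : ℝ) * p n < 1 / 2 :=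
    h.eventually_lt_const (by norm_num)
  refine squeeze_zero' (g := fun n : ℕ => 2 * ((n : ℝ) * p n) ^ 3)
    (Filter.Eventually.of_forall hnn) ?_ ?_
  · filter_upwards [hhalf] with n hn2
    have hx0 : 0 ≤ (n : ℝ) * p n := mul_nonneg (Nat.cast_nonneg n) (hp n).1
    have cover : ∀ G ∈ {G : SimpleGraph (Fin n) | ¬ G.IsAcyclic},
        ∃ k ∈ Finset.Icc 3 n,
          G ∈ {G : SimpleGraph (Fin n) | ∃ u, ∃ w : G.Walk u u, w.IsCycle ∧ w.length = k} := by
      intro G hG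
      rw [Set.mem_setOf_eq] at hG
      unfold SimpleGraph.IsAcyclic at hG
      push_neg at hG
      obtain ⟨u, w, hw⟩ := hG
      refine ⟨w.length, Finset.mem_Icc.mpr ⟨hw.three_le_length, ?_⟩, u, w, hw, rfl⟩
      have h1 : w.support.tail.Nodup := hw.support_nodup
      have h2 := h1.length_le_card
      rw [List.length_tail, w.length_support, Fintype.card_fin] at h2
      omega
    calc erProb n (p n) {G | ¬ G.IsAcyclic}
        ≤ ∑ k ∈ Finset.Icc 3 n, erProb n (p n)
            {G : SimpleGraph (Fin n) | ∃ u, ∃ w : G.Walk u u, w.IsCycle ∧ w.length = k} :=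
          erProb_le_sum (hp n) _ _ _ cover
      _ ≤ ∑ k ∈ Finset.Icc 3 n, ((n : ℝ) * p n) ^ k := by
          refine Finset.sum_le_sum fun k hk => ?_
          rw [mul_pow]
          exact erProb_cycle_le (hp n) (Finset.mem_Icc.mp hk).1
      _ ≤ 2 * ((n : ℝ) * p n) ^ 3 := geom_tail_bound hx0 hn2.le n
  · have := (h.pow 3).const_mul (2 : ℝ)
    simpa using this

end SEP
end

section
/- Let k ≥ 3 be an integer and let p: ℕ → [0,1] satisfy lim_{n→∞} n·p(n) = ∞. Then there exist a constant A > 0 and N ∈ ℕ such that for all n ≥ N, the number X_k of k-cycles of the Erdős–Rényi random graph G ∈ G(n,p(n)) satisfies Var(X_k) ≤ A · E(X_k)² · (n·p(n))^{−1}. -/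
open SimpleGraph Finset Filter

namespace SEP

open scoped Classical in
noncomputable def topE (n : ℕ) : Finset (Sym2 (Fin n)) := (⊤ : SimpleGraph (Fin n)).edgeFinset

open scoped Classical in
lemma card_topE (n : ℕ) : (topE n).card = n.choose 2 := by
  rw [topE, SimpleGraph.card_edgeFinset_top_eq_card_choose_two, Fintype.card_fin]

open scoped Classical in
lemma sum_wt_powerset {α : Type*} [DecidableEq α] (p : ℝ) (E' : Finset α) :
    ∑ s ∈ E'.powerset, p ^ s.card * (1 - p) ^ (E'.card - s.card) = 1 := by
  have h := Finset.prod_add (fun _ : α => p) (fun _ : α => 1 - p) E'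
  simp only [Finset.prod_const] at h
  have h2 : ∀ s ∈ E'.powerset, p ^ s.card * (1 - p) ^ (E'.card - s.card)
      = p ^ s.card * (1 - p) ^ (E' \ s).card := by
    intro s hs
    rw [Finset.card_sdiff_of_subset (Finset.mem_powerset.mp hs)]
  rw [Finset.sum_congr rfl h2, ← h]
  norm_num

open scoped Classical in
lemma mem_topE {n : ℕ} {e : Sym2 (Fin n)} (he : e ∈ topE n) : ¬ e.IsDiag := by
  have := SimpleGraph.mem_edgeFinset.mp he
  rwa [SimpleGraph.edgeSet_top] at this

open scoped Classical in
lemma graphWeight_eq {n : ℕ} (p : ℝ) (G : SimpleGraph (Fin n)) [Fintype G.edgeSet] :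
    graphWeight n p G = p ^ G.edgeFinset.card * (1 - p) ^ ((topE n).card - G.edgeFinset.card) := by
  rw [graphWeight, card_topE, ← SimpleGraph.coe_edgeFinset, Set.ncard_coe_finset]

lemma edgeSet_fromEdgeSet' {n : ℕ} (s : Finset (Sym2 (Fin n))) (hs : s ⊆ topE n) :
    (SimpleGraph.fromEdgeSet (↑s : Set (Sym2 (Fin n)))).edgeSet = ↑s := by
  rw [SimpleGraph.edgeSet_fromEdgeSet]
  ext e
  simp only [Set.mem_diff, Set.mem_setOf_eq, Finset.mem_coe, and_iff_left_iff_imp]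
  exact fun he => mem_topE (hs he)

open scoped Classical in
lemma edgeFinset_fromEdgeSet' {n : ℕ} (s : Finset (Sym2 (Fin n))) (G : SimpleGraph (Fin n))
    (inst : Fintype G.edgeSet) (hG : G = SimpleGraph.fromEdgeSet (↑s : Set (Sym2 (Fin n))))
    (hs : s ⊆ topE n) : @SimpleGraph.edgeFinset _ G inst = s := by
  letI := inst
  apply Finset.coe_injective
  rw [SimpleGraph.coe_edgeFinset, hG]
  exact edgeSet_fromEdgeSet' s hs

lemma fromEdgeSet_edgeFinset' {n : ℕ} (G : SimpleGraph (Fin n)) [Fintype G.edgeSet] :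
    SimpleGraph.fromEdgeSet (↑G.edgeFinset : Set (Sym2 (Fin n))) = G := by
  rw [SimpleGraph.coe_edgeFinset, SimpleGraph.fromEdgeSet_edgeSet]

open scoped Classical in
lemma weight_ind_term {n : ℕ} (p : ℝ) (t : Finset (Sym2 (Fin n))) (G : SimpleGraph (Fin n))
    (inst : Fintype G.edgeSet) (s : Finset (Sym2 (Fin n)))
    (hG : G = SimpleGraph.fromEdgeSet (↑s : Set (Sym2 (Fin n)))) (hs : s ⊆ topE n) :
    letI := inst
    graphWeight n p G * (if (↑t : Set (Sym2 (Fin n))) ⊆ G.edgeSet then (1 : ℝ) else 0)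
      = if t ⊆ s then p ^ s.card * (1 - p) ^ ((topE n).card - s.card) else 0 := by
  letI := inst
  show graphWeight n p G * _ = _
  rw [graphWeight_eq, edgeFinset_fromEdgeSet' s G inst hG hs]
  have hcond : ((↑t : Set (Sym2 (Fin n))) ⊆ G.edgeSet) ↔ t ⊆ s := by
    rw [hG, edgeSet_fromEdgeSet' s hs, Finset.coe_subset]
  by_cases h : t ⊆ s
  · rw [if_pos (hcond.mpr h), if_pos h, mul_one]
  · rw [if_neg (fun hx => h (hcond.mp hx)), if_neg h, mul_zero]

open scoped Classical in
lemma sum_graph_eq {n : ℕ} (f : SimpleGraph (Fin n) → ℝ) :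
    ∑ G : SimpleGraph (Fin n), f G
      = ∑ s ∈ (topE n).powerset, f (SimpleGraph.fromEdgeSet (↑s)) := by
  refine Finset.sum_nbij' (fun G => G.edgeFinset) (fun s => SimpleGraph.fromEdgeSet ↑s)
    ?_ ?_ ?_ ?_ ?_
  · intro G _
    exact Finset.mem_powerset.mpr (SimpleGraph.edgeFinset_mono le_top)
  · intro s _
    exact Finset.mem_univ _
  · intro G _
    exact fromEdgeSet_edgeFinset' G
  · intro s hs
    refine edgeFinset_fromEdgeSet' s _ _ ?_ (Finset.mem_powerset.mp hs)
    rfl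
  · intro G _
    exact congrArg f (fromEdgeSet_edgeFinset' G).symm



open scoped Classical in
lemma sum_weight_ind {n : ℕ} (p : ℝ) (t : Finset (Sym2 (Fin n))) (ht : t ⊆ topE n) :
    ∑ G : SimpleGraph (Fin n),
      graphWeight n p G * (if (↑t : Set (Sym2 (Fin n))) ⊆ G.edgeSet then (1 : ℝ) else 0)
      = p ^ t.card := by
  rw [sum_graph_eq (fun G => graphWeight n p G *
      (if (↑t : Set (Sym2 (Fin n))) ⊆ G.edgeSet then (1 : ℝ) else 0))]
  trans (∑ s ∈ (topE n).powerset,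
      if t ⊆ s then p ^ s.card * (1 - p) ^ ((topE n).card - s.card) else 0)
  · refine Finset.sum_congr rfl ?_
    intro s hs
    refine weight_ind_term p t _ inferInstance s ?_ (Finset.mem_powerset.mp hs)
    rfl
  rw [← Finset.sum_filter]
  trans (∑ r ∈ ((topE n) \ t).powerset,
        p ^ (t ∪ r).card * (1 - p) ^ ((topE n).card - (t ∪ r).card))
  · refine Finset.sum_nbij' (fun s => s \ t) (fun r => t ∪ r) ?_ ?_ ?_ ?_ ?_
    · intro s hs
      simp only [Finset.mem_filter, Finset.mem_powerset] at hs
      exact Finset.mem_powerset.mpr (Finset.sdiff_subset_sdiff hs.1 le_rfl)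
    · intro r hr
      simp only [Finset.mem_powerset] at hr
      refine Finset.mem_filter.mpr ⟨Finset.mem_powerset.mpr ?_, Finset.subset_union_left⟩
      exact Finset.union_subset ht (hr.trans Finset.sdiff_subset)
    · intro s hs
      show t ∪ (s \ t) = s
      exact Finset.union_sdiff_of_subset (Finset.mem_filter.mp hs).2
    · intro r hr
      show (t ∪ r) \ t = r
      simp only [Finset.mem_powerset] at hr
      exact Finset.union_sdiff_cancel_left
        (Finset.disjoint_of_subset_right hr Finset.disjoint_sdiff)
    · intro s hs
      have h := Finset.union_sdiff_of_subset (Finset.mem_filter.mp hs).2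
      show _ = p ^ (t ∪ (s \ t)).card * (1 - p) ^ ((topE n).card - (t ∪ (s \ t)).card)
      rw [h]
  trans (∑ r ∈ ((topE n) \ t).powerset,
      p ^ t.card * (p ^ r.card * (1 - p) ^ (((topE n) \ t).card - r.card)))
  · refine Finset.sum_congr rfl ?_
    intro r hr
    have hd : Disjoint t r :=
      Finset.disjoint_of_subset_right (Finset.mem_powerset.mp hr) Finset.disjoint_sdiff
    have hcu : (t ∪ r).card = t.card + r.card := Finset.card_union_of_disjoint hd
    have hcs : ((topE n) \ t).card = (topE n).card - t.card := Finset.card_sdiff_of_subset ht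
    rw [hcu, hcs, pow_add, Nat.sub_sub, mul_assoc]
  rw [← Finset.mul_sum, sum_wt_powerset, mul_one]

open scoped Classical in
lemma sum_graphWeight {n : ℕ} (p : ℝ) :
    ∑ G : SimpleGraph (Fin n), graphWeight n p G = 1 := by
  have := sum_weight_ind (n := n) p ∅ (Finset.empty_subset _)
  simpa using this
lemma mem_support_of_mem_edge {V : Type*} {G : SimpleGraph V} {u₁ u₂ x : V} {w : G.Walk u₁ u₂}
    {e : Sym2 V} (he : e ∈ w.edges) (hx : x ∈ e) : x ∈ w.support := by
  induction e with
  | _ a b =>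
    rw [Sym2.mem_iff] at hx
    rcases hx with rfl | rfl
    · exact SimpleGraph.Walk.fst_mem_support_of_mem_edges w he
    · exact SimpleGraph.Walk.snd_mem_support_of_mem_edges w he

lemma two_edges_start {V : Type*} {G : SimpleGraph V} {v : V} {w : G.Walk v v}
    (hc : w.IsCycle) :
    ∃ e₁ e₂, e₁ ∈ w.edges ∧ e₂ ∈ w.edges ∧ e₁ ≠ e₂ ∧ v ∈ e₁ ∧ v ∈ e₂ := by
  cases w with
  | nil => exact absurd hc SimpleGraph.Walk.IsCycle.not_of_nil
  | cons h q =>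
    rename_i x
    obtain ⟨y, h', r, hqr⟩ := SimpleGraph.Walk.exists_eq_cons_of_ne h.ne q.reverse
    have he₂r : s(v, y) ∈ q.reverse.edges := by
      rw [hqr, SimpleGraph.Walk.edges_cons]
      exact List.mem_cons_self
    have he₂ : s(v, y) ∈ q.edges := by
      rwa [SimpleGraph.Walk.edges_reverse, List.mem_reverse] at he₂r
    have hnodup : ((SimpleGraph.Walk.cons h q).edges).Nodup := hc.isTrail.edges_nodup
    rw [SimpleGraph.Walk.edges_cons, List.nodup_cons] at hnodup
    refine ⟨s(v, x), s(v, y), ?_, ?_, ?_, ?_, ?_⟩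
    · rw [SimpleGraph.Walk.edges_cons]; exact List.mem_cons_self
    · rw [SimpleGraph.Walk.edges_cons]; exact List.mem_cons_of_mem _ he₂
    · intro hEq
      exact hnodup.1 (hEq ▸ he₂)
    · exact Sym2.mem_mk_left _ _
    · exact Sym2.mem_mk_left _ _

lemma mem_edges_rotate {V : Type*} [DecidableEq V] {G : SimpleGraph V} {u v : V}
    {w : G.Walk v v} (hv : u ∈ w.support) (e : Sym2 V) :
    e ∈ (w.rotate u hv).edges ↔ e ∈ w.edges := by
  rw [SimpleGraph.Walk.rotate, SimpleGraph.Walk.edges_append, List.mem_append]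
  conv_rhs => rw [← w.take_spec hv]
  rw [SimpleGraph.Walk.edges_append, List.mem_append]
  tauto

lemma exists_two_edges {V : Type*} [DecidableEq V] {G : SimpleGraph V} {u v : V}
    {w : G.Walk u u} (hc : w.IsCycle) (hv : v ∈ w.support) :
    ∃ e₁ e₂, e₁ ∈ w.edges ∧ e₂ ∈ w.edges ∧ e₁ ≠ e₂ ∧ v ∈ e₁ ∧ v ∈ e₂ := by
  obtain ⟨e₁, e₂, h1, h2, hne, hv1, hv2⟩ := two_edges_start (hc.rotate hv)
  rw [mem_edges_rotate] at h1 h2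
  exact ⟨e₁, e₂, h1, h2, hne, hv1, hv2⟩

lemma support_toFinset_card_le {V : Type*} [DecidableEq V] {G : SimpleGraph V} {u : V}
    {w : G.Walk u u} (hc : w.IsCycle) : w.support.toFinset.card ≤ w.length := by
  have h1 : w.support = u :: w.support.tail := w.support_eq_cons
  have htne : w.support.tail ≠ [] := by
    intro h
    have := congrArg List.length h1
    rw [SimpleGraph.Walk.length_support, h, List.length_cons, List.length_nil] at this
    have h3 := hc.three_le_length
    omega
  have hu : u ∈ w.support.tail := by
    have hg : w.support.getLast? = some u := by
      rw [List.getLast?_eq_getLast_of_ne_nil w.support_ne_nil]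
      exact congrArg some w.getLast_support
    obtain ⟨a, t, hat⟩ := List.exists_cons_of_ne_nil htne
    rw [h1, hat, List.getLast?_cons_cons] at hg
    obtain ⟨hne2, heq⟩ := List.mem_getLast?_eq_getLast hg
    rw [hat]
    exact heq ▸ List.getLast_mem hne2
  calc w.support.toFinset.card = (u :: w.support.tail).toFinset.card := by rw [← h1]
    _ = (insert u w.support.tail.toFinset).card := by rw [List.toFinset_cons]
    _ = w.support.tail.toFinset.card := by
        rw [Finset.insert_eq_self.mpr (List.mem_toFinset.mpr hu)]
    _ ≤ w.support.tail.length := List.toFinset_card_le _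
    _ = w.length := by
        have := congrArg List.length h1
        rw [SimpleGraph.Walk.length_support] at this
        simp only [List.length_cons] at this
        omega
open scoped Classical in
noncomputable def cycSets (n k : ℕ) : Finset (Finset (Sym2 (Fin n))) :=
  Finset.univ.filter (fun c => ∃ (u : Fin n) (w : (⊤ : SimpleGraph (Fin n)).Walk u u),
    w.IsCycle ∧ w.length = k ∧ c = w.edges.toFinset)

open scoped Classical in
lemma mem_cycSets {n k : ℕ} {c : Finset (Sym2 (Fin n))} :
    c ∈ cycSets n k ↔ ∃ (u : Fin n) (w : (⊤ : SimpleGraph (Fin n)).Walk u u),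
      w.IsCycle ∧ w.length = k ∧ c = w.edges.toFinset := by
  rw [cycSets, Finset.mem_filter]
  simp only [Finset.mem_univ, true_and]

open scoped Classical in
noncomputable def vsupp {n : ℕ} (c : Finset (Sym2 (Fin n))) : Finset (Fin n) :=
  Finset.univ.filter (fun v => ∃ e ∈ c, v ∈ e)

open scoped Classical in
lemma mem_vsupp {n : ℕ} {c : Finset (Sym2 (Fin n))} {v : Fin n} :
    v ∈ vsupp c ↔ ∃ e ∈ c, v ∈ e := by
  rw [vsupp, Finset.mem_filter]
  simp only [Finset.mem_univ, true_and]

lemma vsupp_union {n : ℕ} (c d : Finset (Sym2 (Fin n))) :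
    vsupp (c ∪ d) = vsupp c ∪ vsupp d := by
  ext v
  simp only [mem_vsupp, Finset.mem_union]
  aesop

lemma card_cycSets_mem {n k : ℕ} {c : Finset (Sym2 (Fin n))} (hc : c ∈ cycSets n k) :
    c.card = k := by
  obtain ⟨u, w, hcyc, hlen, rfl⟩ := mem_cycSets.mp hc
  rw [List.toFinset_card_of_nodup hcyc.isTrail.edges_nodup, SimpleGraph.Walk.length_edges, hlen]

open scoped Classical in
lemma cycSets_subset_topE {n k : ℕ} {c : Finset (Sym2 (Fin n))} (hc : c ∈ cycSets n k) :
    c ⊆ topE n := by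
  obtain ⟨u, w, hcyc, hlen, rfl⟩ := mem_cycSets.mp hc
  intro e he
  rw [List.mem_toFinset] at he
  exact SimpleGraph.mem_edgeFinset.mpr (w.edges_subset_edgeSet he)

lemma vsupp_card_le {n k : ℕ} {c : Finset (Sym2 (Fin n))} (hc : c ∈ cycSets n k) :
    (vsupp c).card ≤ k := by
  obtain ⟨u, w, hcyc, hlen, rfl⟩ := mem_cycSets.mp hc
  have hsub : vsupp w.edges.toFinset ⊆ w.support.toFinset := by
    intro v hv
    obtain ⟨e, he, hve⟩ := mem_vsupp.mp hv
    rw [List.mem_toFinset] at he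
    exact List.mem_toFinset.mpr (mem_support_of_mem_edge he hve)
  calc (vsupp w.edges.toFinset).card ≤ w.support.toFinset.card := Finset.card_le_card hsub
    _ ≤ w.length := support_toFinset_card_le hcyc
    _ = k := hlen

lemma two_le_deg {n k : ℕ} {c : Finset (Sym2 (Fin n))} (hc : c ∈ cycSets n k)
    {v : Fin n} (hv : v ∈ vsupp c) :
    2 ≤ (c.filter (fun e => v ∈ e)).card := by
  classical
  obtain ⟨u, w, hcyc, hlen, rfl⟩ := mem_cycSets.mp hc
  obtain ⟨e, he, hve⟩ := mem_vsupp.mp hv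
  rw [List.mem_toFinset] at he
  have hvs : v ∈ w.support := mem_support_of_mem_edge he hve
  obtain ⟨e₁, e₂, h1, h2, hne, hv1, hv2⟩ := exists_two_edges hcyc hvs
  have hsub : ({e₁, e₂} : Finset (Sym2 (Fin n))) ⊆
      (w.edges.toFinset.filter (fun e => v ∈ e)) := by
    intro x hx
    rcases Finset.mem_insert.mp hx with rfl | hx
    · exact Finset.mem_filter.mpr ⟨List.mem_toFinset.mpr h1, hv1⟩
    · rw [Finset.mem_singleton] at hx
      subst hx
      exact Finset.mem_filter.mpr ⟨List.mem_toFinset.mpr h2, hv2⟩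
  calc 2 = ({e₁, e₂} : Finset (Sym2 (Fin n))).card := (Finset.card_pair hne).symm
    _ ≤ _ := Finset.card_le_card hsub

lemma filter_mem_edge_card_le_two {n : ℕ} (s : Finset (Fin n)) (e : Sym2 (Fin n)) :
    (s.filter (fun v => v ∈ e)).card ≤ 2 := by
  classical
  induction e with
  | _ a b =>
    have hsub : s.filter (fun v => v ∈ s(a, b)) ⊆ {a, b} := by
      intro v hv
      have := (Finset.mem_filter.mp hv).2
      rw [Sym2.mem_iff] at this
      rcases this with rfl | rfl
      · exact Finset.mem_insert_self _ _
      · exact Finset.mem_insert_of_mem (Finset.mem_singleton_self _)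
    calc (s.filter (fun v => v ∈ s(a, b))).card ≤ ({a, b} : Finset (Fin n)).card :=
        Finset.card_le_card hsub
      _ ≤ 2 := Finset.card_insert_le _ _ |>.trans (by simp)

lemma card_vsupp_le_card {n : ℕ} (F : Finset (Sym2 (Fin n)))
    (hdeg : ∀ v ∈ vsupp F, 2 ≤ (F.filter (fun e => v ∈ e)).card) :
    (vsupp F).card ≤ F.card := by
  classical
  have key : 2 * (vsupp F).card ≤ 2 * F.card := by
    calc 2 * (vsupp F).card = ∑ _v ∈ vsupp F, 2 := by rw [Finset.sum_const, smul_eq_mul, mul_comm]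
      _ ≤ ∑ v ∈ vsupp F, (F.filter (fun e => v ∈ e)).card := Finset.sum_le_sum hdeg
      _ = ∑ v ∈ vsupp F, ∑ e ∈ F, (if v ∈ e then 1 else 0) := by
          refine Finset.sum_congr rfl fun v _ => ?_
          rw [Finset.card_filter]
      _ = ∑ e ∈ F, ∑ v ∈ vsupp F, (if v ∈ e then 1 else 0) := Finset.sum_comm
      _ = ∑ e ∈ F, ((vsupp F).filter (fun v => v ∈ e)).card := by
          refine Finset.sum_congr rfl fun e _ => ?_
          rw [Finset.card_filter]
      _ ≤ ∑ _e ∈ F, 2 := Finset.sum_le_sum (fun e _ => filter_mem_edge_card_le_two _ e)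
      _ = 2 * F.card := by rw [Finset.sum_const, smul_eq_mul, mul_comm]
  omega

lemma vsupp_union_card_le {n k : ℕ} {c c' : Finset (Sym2 (Fin n))}
    (hc : c ∈ cycSets n k) (hc' : c' ∈ cycSets n k) (hnd : ¬ Disjoint c c') (hk : 1 ≤ k) :
    (vsupp (c ∪ c')).card ≤ 2 * k - 1 := by
  obtain ⟨e, hec, hec'⟩ := Finset.not_disjoint_iff.mp hnd
  have hv : ∃ v, v ∈ e := by
    induction e with
    | _ a b => exact ⟨a, Sym2.mem_mk_left _ _⟩
  obtain ⟨v, hve⟩ := hv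
  have hvc : v ∈ vsupp c := mem_vsupp.mpr ⟨e, hec, hve⟩
  have hvc' : v ∈ vsupp c' := mem_vsupp.mpr ⟨e, hec', hve⟩
  have hinter : 1 ≤ (vsupp c ∩ vsupp c').card :=
    Finset.card_pos.mpr ⟨v, Finset.mem_inter.mpr ⟨hvc, hvc'⟩⟩
  have hcard := Finset.card_union_add_card_inter (vsupp c) (vsupp c')
  have h1 := vsupp_card_le hc
  have h2 := vsupp_card_le hc'
  rw [vsupp_union]
  omega

lemma card_union_le_of_cyc {n k : ℕ} {c c' : Finset (Sym2 (Fin n))}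
    (hc : c ∈ cycSets n k) (hc' : c' ∈ cycSets n k) :
    (vsupp (c ∪ c')).card ≤ (c ∪ c').card := by
  refine card_vsupp_le_card _ ?_
  intro v hv
  rw [vsupp_union, Finset.mem_union] at hv
  classical
  rcases hv with hv | hv
  · calc 2 ≤ (c.filter (fun e => v ∈ e)).card := two_le_deg hc hv
      _ ≤ ((c ∪ c').filter (fun e => v ∈ e)).card :=
        Finset.card_le_card (Finset.filter_subset_filter _ Finset.subset_union_left)
  · calc 2 ≤ (c'.filter (fun e => v ∈ e)).card := two_le_deg hc' hv
      _ ≤ ((c ∪ c').filter (fun e => v ∈ e)).card :=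
        Finset.card_le_card (Finset.filter_subset_filter _ Finset.subset_union_right)
open scoped Classical in
lemma numCycles_eq {n k : ℕ} (G : SimpleGraph (Fin n)) :
    numCycles G k
      = ((cycSets n k).filter (fun c : Finset (Sym2 (Fin n)) => (↑c : Set (Sym2 (Fin n))) ⊆ G.edgeSet)).card := by
  rw [numCycles]
  set F : Finset (Finset (Sym2 (Fin n))) :=
    (cycSets n k).filter (fun c : Finset (Sym2 (Fin n)) => (↑c : Set (Sym2 (Fin n))) ⊆ G.edgeSet) with hF
  have hset : {s : Set (Sym2 (Fin n)) |
      ∃ (u : Fin n) (w : G.Walk u u), w.IsCycle ∧ w.length = k ∧ s = {e | e ∈ w.edges}}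
      = (fun t : Finset (Sym2 (Fin n)) => (↑t : Set (Sym2 (Fin n)))) ''
        (↑F : Set (Finset (Sym2 (Fin n)))) := by
    ext s
    simp only [hF, Set.mem_setOf_eq, Set.mem_image, Finset.mem_coe, Finset.mem_filter]
    constructor
    · rintro ⟨u, w, hcyc, hlen, rfl⟩
      have hsub : ∀ e ∈ w.edges, e ∈ (⊤ : SimpleGraph (Fin n)).edgeSet := fun e he =>
        SimpleGraph.edgeSet_mono le_top (w.edges_subset_edgeSet he)
      refine ⟨w.edges.toFinset, ⟨?_, ?_⟩, ?_⟩
      · refine mem_cycSets.mpr ⟨u, w.transfer ⊤ hsub, hcyc.transfer hsub, ?_, ?_⟩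
        · rw [SimpleGraph.Walk.length_transfer]
          exact hlen
        · rw [SimpleGraph.Walk.edges_transfer]
      · intro e he
        rw [Finset.mem_coe, List.mem_toFinset] at he
        exact w.edges_subset_edgeSet he
      · ext e
        simp [List.mem_toFinset]
    · rintro ⟨t, ⟨ht, hsub⟩, rfl⟩
      obtain ⟨u, w, hcyc, hlen, rfl⟩ := mem_cycSets.mp ht
      have hsub' : ∀ e ∈ w.edges, e ∈ G.edgeSet := fun e he =>
        hsub (by rwa [Finset.mem_coe, List.mem_toFinset])
      refine ⟨u, w.transfer G hsub', hcyc.transfer hsub', ?_, ?_⟩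
      · rw [SimpleGraph.Walk.length_transfer]
        exact hlen
      · rw [SimpleGraph.Walk.edges_transfer]
        ext e
        simp [List.mem_toFinset]
  rw [hset, Set.ncard_image_of_injective _ Finset.coe_injective, Set.ncard_coe_finset]

open scoped Classical in
lemma numCycles_cast {n k : ℕ} (G : SimpleGraph (Fin n)) :
    (numCycles G k : ℝ) = ∑ c ∈ cycSets n k,
      (if (↑c : Set (Sym2 (Fin n))) ⊆ G.edgeSet then (1 : ℝ) else 0) := by
  rw [numCycles_eq, Finset.card_filter, Nat.cast_sum]
  refine Finset.sum_congr rfl fun c _ => ?_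
  split <;> simp
lemma erVar_eq {n : ℕ} (p : ℝ) (X : SimpleGraph (Fin n) → ℝ) :
    erVar n p X = erExp n p (fun G => X G ^ 2) - (erExp n p X) ^ 2 := by
  set μ := erExp n p X with hμ
  have h1 : ∀ G ∈ (Finset.univ : Finset (SimpleGraph (Fin n))),
      graphWeight n p G * (X G - μ) ^ 2
      = (graphWeight n p G * X G ^ 2 + μ ^ 2 * graphWeight n p G)
          - 2 * μ * (graphWeight n p G * X G) := fun G _ => by ring
  calc erVar n p X = ∑ G : SimpleGraph (Fin n), graphWeight n p G * (X G - μ) ^ 2 := rfl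
    _ = ∑ G : SimpleGraph (Fin n),
          ((graphWeight n p G * X G ^ 2 + μ ^ 2 * graphWeight n p G)
            - 2 * μ * (graphWeight n p G * X G)) := Finset.sum_congr rfl h1
    _ = ((∑ G : SimpleGraph (Fin n), graphWeight n p G * X G ^ 2)
          + μ ^ 2 * (∑ G : SimpleGraph (Fin n), graphWeight n p G))
          - 2 * μ * (∑ G : SimpleGraph (Fin n), graphWeight n p G * X G) := by
        rw [Finset.sum_sub_distrib, Finset.sum_add_distrib, ← Finset.mul_sum, ← Finset.mul_sum]
    _ = erExp n p (fun G => X G ^ 2) + μ ^ 2 * 1 - 2 * μ * μ := by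
        rw [sum_graphWeight]
        rfl
    _ = erExp n p (fun G => X G ^ 2) - μ ^ 2 := by ring

open scoped Classical in
lemma ind_mul_ind {n : ℕ} (c c' : Finset (Sym2 (Fin n))) (G : SimpleGraph (Fin n)) :
    (if (↑c : Set (Sym2 (Fin n))) ⊆ G.edgeSet then (1 : ℝ) else 0)
      * (if (↑c' : Set (Sym2 (Fin n))) ⊆ G.edgeSet then (1 : ℝ) else 0)
    = if (↑(c ∪ c') : Set (Sym2 (Fin n))) ⊆ G.edgeSet then (1 : ℝ) else 0 := by
  have hiff : ((↑(c ∪ c') : Set (Sym2 (Fin n))) ⊆ G.edgeSet)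
      ↔ ((↑c : Set (Sym2 (Fin n))) ⊆ G.edgeSet ∧ (↑c' : Set (Sym2 (Fin n))) ⊆ G.edgeSet) := by
    rw [Finset.coe_union, Set.union_subset_iff]
  by_cases h1 : (↑c : Set (Sym2 (Fin n))) ⊆ G.edgeSet
    <;> by_cases h2 : (↑c' : Set (Sym2 (Fin n))) ⊆ G.edgeSet
    <;> simp [h1, h2, hiff]

open scoped Classical in
lemma erExp_numCycles {n k : ℕ} (p : ℝ) :
    erExp n p (fun G => (numCycles G k : ℝ)) = ∑ c ∈ cycSets n k, p ^ c.card := by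
  rw [erExp]
  have h : ∀ G ∈ (Finset.univ : Finset (SimpleGraph (Fin n))),
      graphWeight n p G * (numCycles G k : ℝ)
      = ∑ c ∈ cycSets n k,
          graphWeight n p G * (if (↑c : Set (Sym2 (Fin n))) ⊆ G.edgeSet then (1 : ℝ) else 0) :=
    fun G _ => by rw [numCycles_cast, Finset.mul_sum]
  rw [Finset.sum_congr rfl h, Finset.sum_comm]
  exact Finset.sum_congr rfl fun c hc => sum_weight_ind p c (cycSets_subset_topE hc)

open scoped Classical in
lemma erExp_numCycles_sq {n k : ℕ} (p : ℝ) :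
    erExp n p (fun G => (numCycles G k : ℝ) ^ 2)
    = ∑ c ∈ cycSets n k, ∑ c' ∈ cycSets n k, p ^ (c ∪ c').card := by
  rw [erExp]
  have h : ∀ G ∈ (Finset.univ : Finset (SimpleGraph (Fin n))),
      graphWeight n p G * (numCycles G k : ℝ) ^ 2
      = ∑ c ∈ cycSets n k, ∑ c' ∈ cycSets n k,
          graphWeight n p G
            * (if (↑(c ∪ c') : Set (Sym2 (Fin n))) ⊆ G.edgeSet then (1 : ℝ) else 0) := by
    intro G _
    rw [numCycles_cast, sq, Finset.sum_mul_sum]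
    rw [Finset.mul_sum]
    refine Finset.sum_congr rfl fun c _ => ?_
    rw [Finset.mul_sum]
    refine Finset.sum_congr rfl fun c' _ => ?_
    rw [ind_mul_ind]
  rw [Finset.sum_congr rfl h, Finset.sum_comm]
  refine Finset.sum_congr rfl fun c hc => ?_
  rw [Finset.sum_comm]
  refine Finset.sum_congr rfl fun c' hc' => ?_
  exact sum_weight_ind p (c ∪ c')
    (Finset.union_subset (cycSets_subset_topE hc) (cycSets_subset_topE hc'))

open scoped Classical in
lemma erVar_numCycles {n k : ℕ} (p : ℝ) :
    erVar n p (fun G => (numCycles G k : ℝ))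
    = ∑ c ∈ cycSets n k, ∑ c' ∈ cycSets n k,
        (p ^ (c ∪ c').card - p ^ c.card * p ^ c'.card) := by
  rw [erVar_eq, erExp_numCycles_sq, erExp_numCycles, sq, Finset.sum_mul_sum]
  rw [← Finset.sum_sub_distrib]
  refine Finset.sum_congr rfl fun c _ => ?_
  rw [← Finset.sum_sub_distrib]
open scoped Classical in
lemma sum_powerset_card_le {n m : ℕ} (p : ℝ) (hp0 : 0 ≤ p) (hm : 1 ≤ m)
    (hnp : 1 ≤ (n : ℝ) * p) :
    ∑ U ∈ (Finset.univ : Finset (Finset (Fin n))).filter (fun U => U.card ≤ m - 1),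
        p ^ U.card ≤ (m : ℝ) * ((n : ℝ) * p) ^ (m - 1) := by
  have hbi : (Finset.univ : Finset (Finset (Fin n))).filter (fun U => U.card ≤ m - 1)
      = (Finset.range m).biUnion (fun v => Finset.powersetCard v Finset.univ) := by
    ext U
    simp only [Finset.mem_filter, Finset.mem_univ, true_and, Finset.mem_biUnion,
      Finset.mem_range, Finset.mem_powersetCard, Finset.subset_univ]
    constructor
    · intro h; exact ⟨U.card, by omega, rfl⟩
    · rintro ⟨v, hv, rfl⟩; omega
  rw [hbi, Finset.sum_biUnion]
  · have hinner : ∀ v ∈ Finset.range m,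
        ∑ U ∈ Finset.powersetCard v (Finset.univ : Finset (Fin n)), p ^ U.card
          ≤ ((n : ℝ) * p) ^ (m - 1) := by
      intro v hv
      rw [Finset.mem_range] at hv
      have h1 : ∀ U ∈ Finset.powersetCard v (Finset.univ : Finset (Fin n)),
          p ^ U.card = p ^ v := by
        intro U hU
        rw [(Finset.mem_powersetCard.mp hU).2]
      rw [Finset.sum_congr rfl h1, Finset.sum_const, Finset.card_powersetCard,
        Finset.card_univ, Fintype.card_fin, nsmul_eq_mul]
      calc (n.choose v : ℝ) * p ^ v ≤ (n : ℝ) ^ v * p ^ v := by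
            refine mul_le_mul_of_nonneg_right ?_ (pow_nonneg hp0 v)
            exact_mod_cast Nat.choose_le_pow n v
        _ = ((n : ℝ) * p) ^ v := (mul_pow _ _ _).symm
        _ ≤ ((n : ℝ) * p) ^ (m - 1) := pow_le_pow_right₀ hnp (by omega)
    calc ∑ v ∈ Finset.range m, ∑ U ∈ Finset.powersetCard v (Finset.univ : Finset (Fin n)),
          p ^ U.card
        ≤ ∑ _v ∈ Finset.range m, ((n : ℝ) * p) ^ (m - 1) := Finset.sum_le_sum hinner
      _ = (m : ℝ) * ((n : ℝ) * p) ^ (m - 1) := by rw [Finset.sum_const, Finset.card_range,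
            nsmul_eq_mul]
  · intro a _ b _ hab
    simp only [Function.onFun]
    rw [Finset.disjoint_left]
    intro U hU hU'
    rw [Finset.mem_powersetCard] at hU hU'
    omega

open scoped Classical in
lemma fiber_card_le {n k : ℕ} (P : Finset (Finset (Sym2 (Fin n)) × Finset (Sym2 (Fin n))))
    (hP : ∀ x ∈ P, (vsupp (x.1 ∪ x.2)).card ≤ 2 * k - 1)
    (hPv : ∀ x ∈ P, ∀ e ∈ x.1 ∪ x.2, ∀ a ∈ e, a ∈ vsupp (x.1 ∪ x.2))
    (U : Finset (Fin n)) (hU : U ∈ P.image (fun x => vsupp (x.1 ∪ x.2))) (hk : 1 ≤ k) :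
    (P.filter (fun x => vsupp (x.1 ∪ x.2) = U)).card ≤ 2 ^ (8 * k * k) := by
  obtain ⟨x₀, hx₀, hUx₀⟩ := Finset.mem_image.mp hU
  have hUcard : U.card ≤ 2 * k - 1 := hUx₀ ▸ hP x₀ hx₀
  have hsub : P.filter (fun x => vsupp (x.1 ∪ x.2) = U)
      ⊆ U.sym2.powerset ×ˢ U.sym2.powerset := by
    intro x hx
    obtain ⟨hxP, hxU⟩ := Finset.mem_filter.mp hx
    have hmem : ∀ c ⊆ x.1 ∪ x.2, c ∈ U.sym2.powerset := by
      intro c hc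
      refine Finset.mem_powerset.mpr ?_
      intro e he
      rw [Finset.mem_sym2_iff]
      intro a ha
      exact hxU ▸ hPv x hxP e (hc he) a ha
    exact Finset.mem_product.mpr ⟨hmem _ Finset.subset_union_left,
      hmem _ Finset.subset_union_right⟩
  have hsym2 : U.sym2.card ≤ 4 * k * k := by
    rw [Finset.card_sym2]
    calc (U.card + 1).choose 2 ≤ (U.card + 1) ^ 2 := Nat.choose_le_pow (U.card + 1) 2
      _ ≤ (2 * k) ^ 2 := Nat.pow_le_pow_left (by omega) 2
      _ = 4 * k * k := by ring
  calc (P.filter (fun x => vsupp (x.1 ∪ x.2) = U)).card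
      ≤ (U.sym2.powerset ×ˢ U.sym2.powerset).card := Finset.card_le_card hsub
    _ = 2 ^ U.sym2.card * 2 ^ U.sym2.card := by
        rw [Finset.card_product, Finset.card_powerset]
    _ = 2 ^ (U.sym2.card + U.sym2.card) := (pow_add 2 _ _).symm
    _ ≤ 2 ^ (8 * k * k) := by
        have h8 : 4 * k * k + 4 * k * k = 8 * k * k := by ring
        exact Nat.pow_le_pow_right (by omega) (by omega)

set_option maxHeartbeats 1000000 in
open scoped Classical in
lemma erVar_le {n k : ℕ} (hk : 3 ≤ k) (p : ℝ) (hp0 : 0 ≤ p) (hp1 : p ≤ 1)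
    (hnp : 1 ≤ (n : ℝ) * p) :
    erVar n p (fun G => (numCycles G k : ℝ))
      ≤ (2 : ℝ) ^ (8 * k * k) * (2 * k) * ((n : ℝ) * p) ^ (2 * k - 1) := by
  rw [erVar_numCycles]
  set C := cycSets n k with hC
  have hpair : ∑ c ∈ C, ∑ c' ∈ C, (p ^ (c ∪ c').card - p ^ c.card * p ^ c'.card)
      = ∑ x ∈ C ×ˢ C, (p ^ (x.1 ∪ x.2).card - p ^ x.1.card * p ^ x.2.card) :=
    (Finset.sum_product' _ _ _).symm
  rw [hpair]
  set P := (C ×ˢ C).filter (fun x => ¬ Disjoint x.1 x.2) with hPdef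
  have hsplit : ∑ x ∈ C ×ˢ C, (p ^ (x.1 ∪ x.2).card - p ^ x.1.card * p ^ x.2.card)
      = ∑ x ∈ P, (p ^ (x.1 ∪ x.2).card - p ^ x.1.card * p ^ x.2.card) := by
    rw [hPdef, Finset.sum_filter]
    refine Finset.sum_congr rfl fun x _ => ?_
    by_cases h : Disjoint x.1 x.2
    · rw [if_neg (not_not_intro h), Finset.card_union_of_disjoint h, pow_add, sub_self]
    · rw [if_pos h]
  rw [hsplit]
  have hmemP : ∀ x ∈ P, x.1 ∈ C ∧ x.2 ∈ C ∧ ¬ Disjoint x.1 x.2 := by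
    intro x hx
    obtain ⟨hx1, hx2⟩ := Finset.mem_filter.mp hx
    obtain ⟨h1, h2⟩ := Finset.mem_product.mp hx1
    exact ⟨h1, h2, hx2⟩
  have hstep1 : ∑ x ∈ P, (p ^ (x.1 ∪ x.2).card - p ^ x.1.card * p ^ x.2.card)
      ≤ ∑ x ∈ P, p ^ (vsupp (x.1 ∪ x.2)).card := by
    refine Finset.sum_le_sum fun x hx => ?_
    obtain ⟨h1, h2, _⟩ := hmemP x hx
    calc p ^ (x.1 ∪ x.2).card - p ^ x.1.card * p ^ x.2.card
        ≤ p ^ (x.1 ∪ x.2).card := by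
          have : 0 ≤ p ^ x.1.card * p ^ x.2.card :=
            mul_nonneg (pow_nonneg hp0 _) (pow_nonneg hp0 _)
          linarith
      _ ≤ p ^ (vsupp (x.1 ∪ x.2)).card :=
          pow_le_pow_of_le_one hp0 hp1 (card_union_le_of_cyc h1 h2)
  refine hstep1.trans ?_
  have hcomp : ∑ x ∈ P, p ^ (vsupp (x.1 ∪ x.2)).card
      = ∑ U ∈ P.image (fun x => vsupp (x.1 ∪ x.2)),
          (P.filter (fun x => vsupp (x.1 ∪ x.2) = U)).card • p ^ U.card := by
    exact Finset.sum_comp (fun U : Finset (Fin n) => p ^ U.card)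
      (fun x : Finset (Sym2 (Fin n)) × Finset (Sym2 (Fin n)) => vsupp (x.1 ∪ x.2))
  rw [hcomp]
  have hP : ∀ x ∈ P, (vsupp (x.1 ∪ x.2)).card ≤ 2 * k - 1 := by
    intro x hx
    obtain ⟨h1, h2, h3⟩ := hmemP x hx
    exact vsupp_union_card_le h1 h2 h3 (by omega)
  have hPv : ∀ x ∈ P, ∀ e ∈ x.1 ∪ x.2, ∀ a ∈ e, a ∈ vsupp (x.1 ∪ x.2) := by
    intro x _ e he a ha
    exact mem_vsupp.mpr ⟨e, he, ha⟩
  have hstep2 : ∑ U ∈ P.image (fun x => vsupp (x.1 ∪ x.2)),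
        (P.filter (fun x => vsupp (x.1 ∪ x.2) = U)).card • p ^ U.card
      ≤ ∑ U ∈ P.image (fun x => vsupp (x.1 ∪ x.2)),
          (2 : ℝ) ^ (8 * k * k) * p ^ U.card := by
    refine Finset.sum_le_sum fun U hU => ?_
    rw [nsmul_eq_mul]
    refine mul_le_mul_of_nonneg_right ?_ (pow_nonneg hp0 _)
    calc ((P.filter (fun x => vsupp (x.1 ∪ x.2) = U)).card : ℝ)
        ≤ ((2 : ℕ) ^ (8 * k * k) : ℝ) := by
          exact_mod_cast fiber_card_le P hP hPv U hU (by omega)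
      _ = (2 : ℝ) ^ (8 * k * k) := by push_cast; ring
  refine hstep2.trans ?_
  rw [← Finset.mul_sum]
  have hsub : P.image (fun x => vsupp (x.1 ∪ x.2))
      ⊆ (Finset.univ : Finset (Finset (Fin n))).filter (fun U => U.card ≤ 2 * k - 1) := by
    intro U hU
    obtain ⟨x, hx, rfl⟩ := Finset.mem_image.mp hU
    exact Finset.mem_filter.mpr ⟨Finset.mem_univ _, hP x hx⟩
  have hstep3 : ∑ U ∈ P.image (fun x => vsupp (x.1 ∪ x.2)), p ^ U.card
      ≤ ∑ U ∈ (Finset.univ : Finset (Finset (Fin n))).filter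
          (fun U => U.card ≤ 2 * k - 1), p ^ U.card :=
    Finset.sum_le_sum_of_subset_of_nonneg hsub (fun U _ _ => pow_nonneg hp0 _)
  have hstep4 := sum_powerset_card_le (n := n) (m := 2 * k) p hp0 (by omega) hnp
  calc (2 : ℝ) ^ (8 * k * k) * ∑ U ∈ P.image (fun x => vsupp (x.1 ∪ x.2)), p ^ U.card
      ≤ (2 : ℝ) ^ (8 * k * k) * (((2 * k : ℕ) : ℝ) * ((n : ℝ) * p) ^ (2 * k - 1)) :=
        mul_le_mul_of_nonneg_left (hstep3.trans hstep4)
          (by positivity : (0 : ℝ) ≤ (2 : ℝ) ^ (8 * k * k))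
    _ = (2 : ℝ) ^ (8 * k * k) * (2 * k) * ((n : ℝ) * p) ^ (2 * k - 1) := by
        push_cast; ring
lemma expCycles_lb {n k : ℕ} (hk : 1 ≤ k) (p : ℝ) (hp0 : 0 ≤ p) (hn : 2 * k ≤ n) :
    ((n : ℝ) * p) ^ k / ((2 : ℝ) ^ (k + 1) * k) ≤ expCycles n p k := by
  have hk0 : (0 : ℝ) < k := by exact_mod_cast (by omega : 0 < k)
  have hkfac : (Nat.factorial k : ℝ) = (k : ℝ) * (Nat.factorial (k - 1) : ℝ) := by
    have : k = (k - 1) + 1 := by omega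
    rw [this, Nat.factorial_succ]
    push_cast
    rfl
  have hcast : (((n + 1 - k : ℕ)) : ℝ) = (n : ℝ) + 1 - (k : ℝ) := by
    have hkn : k ≤ n + 1 := by omega
    push_cast [Nat.cast_sub hkn]
    ring
  have hhalf : (n : ℝ) / 2 ≤ (((n + 1 - k : ℕ)) : ℝ) := by
    rw [hcast]
    have : (2 : ℝ) * k ≤ (n : ℝ) := by exact_mod_cast hn
    linarith
  have hA : ((n : ℝ) / 2) ^ k ≤ (Nat.factorial k : ℝ) * (n.choose k : ℝ) := by
    have h1 : ((n + 1 - k) ^ k : ℕ) ≤ n.descFactorial k := Nat.pow_sub_le_descFactorial n k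
    have h2 : n.descFactorial k = Nat.factorial k * n.choose k :=
      Nat.descFactorial_eq_factorial_mul_choose n k
    have h3 : (((n + 1 - k : ℕ) : ℝ)) ^ k ≤ (Nat.factorial k : ℝ) * (n.choose k : ℝ) := by
      have h4 : (n + 1 - k) ^ k ≤ Nat.factorial k * n.choose k := h2 ▸ h1
      exact_mod_cast h4
    calc ((n : ℝ) / 2) ^ k ≤ (((n + 1 - k : ℕ)) : ℝ) ^ k :=
        pow_le_pow_left₀ (by positivity) hhalf k
      _ ≤ _ := h3
  have hfacpos : (0 : ℝ) < (Nat.factorial k : ℝ) := by exact_mod_cast k.factorial_pos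
  have hchoose : ((n : ℝ) / 2) ^ k / (Nat.factorial k : ℝ) ≤ (n.choose k : ℝ) := by
    rw [div_le_iff₀ hfacpos]
    calc ((n : ℝ) / 2) ^ k ≤ (Nat.factorial k : ℝ) * (n.choose k : ℝ) := hA
      _ = (n.choose k : ℝ) * (Nat.factorial k : ℝ) := mul_comm _ _
  have hmain : ((n : ℝ) * p) ^ k / ((2 : ℝ) ^ (k + 1) * k)
      = ((n : ℝ) / 2) ^ k / (Nat.factorial k : ℝ)
        * ((Nat.factorial (k - 1) : ℝ) / 2) * p ^ k := by
    rw [hkfac, mul_pow, div_pow, pow_succ]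
    have hfik : (0 : ℝ) < (Nat.factorial (k - 1) : ℝ) := by exact_mod_cast (k-1).factorial_pos
    field_simp
  rw [hmain, expCycles]
  refine mul_le_mul_of_nonneg_right ?_ (pow_nonneg hp0 k)
  exact mul_le_mul_of_nonneg_right hchoose (by positivity)

open Filter in
theorem stmt12 (k : ℕ) (hk : 3 ≤ k) (p : ℕ → ℝ) (hp : ∀ n, p n ∈ Set.Icc (0 : ℝ) 1)
    (h : Tendsto (fun n : ℕ => (n : ℝ) * p n) atTop atTop) :
    ∃ A > (0 : ℝ), ∃ N : ℕ, ∀ n ≥ N,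
      erVar n (p n) (fun G => (numCycles G k : ℝ)) ≤
        A * (expCycles n (p n) k) ^ 2 * ((n : ℝ) * p n)⁻¹ := by
  have hk0 : (0 : ℝ) < (k : ℝ) := by exact_mod_cast (by omega : 0 < k)
  refine ⟨(2 : ℝ) ^ (8 * k * k) * (2 * k) * ((2 : ℝ) ^ (k + 1) * k) ^ 2, ?_, ?_⟩
  · have h1 : (0 : ℝ) < (2 : ℝ) ^ (8 * k * k) := by positivity
    have h2 : (0 : ℝ) < 2 * (k : ℝ) := by linarith
    have h3 : (0 : ℝ) < ((2 : ℝ) ^ (k + 1) * k) ^ 2 := by positivity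
    positivity
  · obtain ⟨N, hN⟩ := eventually_atTop.mp (h.eventually_ge_atTop (2 * (k : ℝ)))
    refine ⟨N, fun n hn => ?_⟩
    have hp0 : 0 ≤ p n := (hp n).1
    have hp1 : p n ≤ 1 := (hp n).2
    have hnp2k : 2 * (k : ℝ) ≤ (n : ℝ) * p n := hN n hn
    have hk3 : (3 : ℝ) ≤ (k : ℝ) := by exact_mod_cast hk
    have hone : (1 : ℝ) ≤ (n : ℝ) * p n := by linarith
    have hpos : (0 : ℝ) < (n : ℝ) * p n := by linarith
    have h2kn : 2 * k ≤ n := by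
      have hnn : (n : ℝ) * p n ≤ (n : ℝ) := by
        calc (n : ℝ) * p n ≤ (n : ℝ) * 1 := by
              exact mul_le_mul_of_nonneg_left hp1 (Nat.cast_nonneg n)
          _ = (n : ℝ) := mul_one _
      have : (2 * k : ℝ) ≤ (n : ℝ) := by push_cast; linarith
      exact_mod_cast this
    have hvar := erVar_le (n := n) hk (p n) hp0 hp1 hone
    have hE : ((n : ℝ) * p n) ^ k ≤ (2 : ℝ) ^ (k + 1) * k * expCycles n (p n) k := by
      have hL := expCycles_lb (n := n) (k := k) (by omega) (p n) hp0 h2kn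
      have hden : (0 : ℝ) < (2 : ℝ) ^ (k + 1) * k := by positivity
      rw [div_le_iff₀ hden] at hL
      linarith [hL]
    have hEnn : (0 : ℝ) ≤ expCycles n (p n) k := by
      have := pow_nonneg (mul_nonneg (Nat.cast_nonneg n) hp0) k
      nlinarith [hE, (by positivity : (0:ℝ) < (2:ℝ)^(k+1) * k)]
    have hsq : (((n : ℝ) * p n) ^ k) ^ 2 ≤ ((2 : ℝ) ^ (k + 1) * k * expCycles n (p n) k) ^ 2 :=
      pow_le_pow_left₀ (pow_nonneg (le_of_lt hpos) k) hE 2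
    have hpow : ((n : ℝ) * p n) ^ (2 * k - 1)
        = (((n : ℝ) * p n) ^ k) ^ 2 * ((n : ℝ) * p n)⁻¹ := by
      have h1 : (((n : ℝ) * p n) ^ k) ^ 2 = ((n : ℝ) * p n) ^ (2 * k) := by
        rw [← pow_mul]
        congr 1
        ring
      have h2 : ((n : ℝ) * p n) ^ (2 * k) = ((n : ℝ) * p n) ^ (2 * k - 1) * ((n : ℝ) * p n) := by
        rw [← pow_succ]
        congr 1
        omega
      rw [h1, h2]
      rw [mul_assoc, mul_inv_cancel₀ hpos.ne', mul_one]
    calc erVar n (p n) (fun G => (numCycles G k : ℝ))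
        ≤ (2 : ℝ) ^ (8 * k * k) * (2 * k) * ((n : ℝ) * p n) ^ (2 * k - 1) := hvar
      _ = (2 : ℝ) ^ (8 * k * k) * (2 * k)
          * ((((n : ℝ) * p n) ^ k) ^ 2 * ((n : ℝ) * p n)⁻¹) := by rw [hpow]
      _ ≤ (2 : ℝ) ^ (8 * k * k) * (2 * k)
          * (((2 : ℝ) ^ (k + 1) * k * expCycles n (p n) k) ^ 2 * ((n : ℝ) * p n)⁻¹) := by
          refine mul_le_mul_of_nonneg_left ?_ (by positivity)
          exact mul_le_mul_of_nonneg_right hsq (inv_nonneg.mpr (le_of_lt hpos))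
      _ = (2 : ℝ) ^ (8 * k * k) * (2 * k) * ((2 : ℝ) ^ (k + 1) * k) ^ 2
          * (expCycles n (p n) k) ^ 2 * ((n : ℝ) * p n)⁻¹ := by ring

end SEP
end
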